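/- arXiv:1108.4061 — 6 statements merged into one kernel-verified Lean document; each statement's English description precedes it below -/
import Mathlib

section
/- Let M and N be relatively prime positive integers with N < M < 2N. Set K = M − N + 1, L = ⌊M/K⌋, and r = K(L+1) − M. Then there exists a matrix A ∈ ℂ^{N×M} such that every column of A has norm 1, A·Aᴴ = (M/N)·I_N (i.e., the rows of A are pairwise orthogonal, each with squared norm M/N, so the columns of A form an M-element unit norm tight frame for ℂ^N), and A has at most rL² + (K−r)(L+1)² nonzero entries. -/
/-!
Spectral tetris with blocks. Group the `M` columns into `K` consecutive blocks of `ℓ_j ∈ {L, L+1}`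
columns and pour the mass of the columns, one unit each and in column order, into `N` rows of
capacity `x = M/N`. If every block pours its mass into only `ℓ_j` consecutive rows, block `j`
deposits weights `w_j(n) ≥ 0` in those rows with `∑ₙ w_j(n) = ℓ_j` and `∑_j w_j(n) = x`. Scaling the
rows of the `ℓ_j × ℓ_j` DFT matrix by `√(w_j(n)/ℓ_j)` then gives a block whose columns are unit
vectors and whose rows are orthogonal with squared norms `w_j(n)`; the blocks together form a unit
norm tight frame with at most `∑ ℓ_j²` nonzero entries.

Whether the blocks fit their rows depends only on the partial sums of the block sizes: the unfilled
part of the row that block `j` shares with block `j + 1` has to stay in `[0, x]`. Taking a block of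
size `L` whenever that keeps this quantity nonnegative, and one of size `L + 1` otherwise, keeps it
in range.
-/

open Finset ComplexConjugate
open scoped Matrix

theorem IsPrimitiveRoot.sum_pow_mul_conj_pow {ζ : ℂ} {l : ℕ} (hζ : IsPrimitiveRoot ζ l)
    {u u' : ℕ} (hu : u < l) (hu' : u' < l) :
    ∑ q ∈ range l, ζ ^ (u * q) * conj (ζ ^ (u' * q)) = if u = u' then (l : ℂ) else 0 := by
  have hl : l ≠ 0 := by omega
  have hζ0 : ζ ≠ 0 := hζ.ne_zero hl
  have hconj (k : ℕ) : conj (ζ ^ k) = (ζ ^ k)⁻¹ :=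
    (Complex.inv_eq_conj (by rw [norm_pow, hζ.norm'_eq_one hl, one_pow])).symm
  set z := ζ ^ ((u : ℤ) - u') with hz
  have hterm (q : ℕ) : ζ ^ (u * q) * conj (ζ ^ (u' * q)) = z ^ q := by
    rw [hconj, hz, ← zpow_natCast, ← zpow_natCast, ← zpow_neg, ← zpow_add₀ hζ0, ← zpow_natCast,
      ← zpow_mul]
    push_cast; ring_nf
  simp_rw [hterm]
  split_ifs with h
  · simp [hz, h]
  · have hz1 : z ≠ 1 := by
      intro hz1
      have hdvd := (hζ.zpow_eq_one_iff_dvd _).1 hz1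
      exact h (by have := Int.eq_zero_of_abs_lt_dvd hdvd (by rw [abs_lt]; omega); omega)
    have hzl : z ^ l = 1 := by
      rw [hz, ← zpow_natCast, ← zpow_mul, mul_comm, zpow_mul, zpow_natCast, hζ.pow_eq_one, one_zpow]
    rw [geom_sum_eq hz1, hzl, sub_self, zero_div]

theorem Matrix.ncard_ne_zero_le_sum {ι κ α : Type*} [Fintype ι] [Fintype κ] [Zero α]
    [DecidableEq α] (A : Matrix ι κ α) {b : κ → ℕ} (h : ∀ m, #{n | A n m ≠ 0} ≤ b m) :
    {p : ι × κ | A p.1 p.2 ≠ 0}.ncard ≤ ∑ m, b m :=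
  calc {p : ι × κ | A p.1 p.2 ≠ 0}.ncard = #{p : ι × κ | A p.1 p.2 ≠ 0} := by
        rw [← Set.ncard_coe_finset, coe_filter]; simp
    _ = ∑ m, #{n | A n m ≠ 0} := by
        simp only [card_filter]; exact Fintype.sum_prod_type_right _
    _ ≤ ∑ m, b m := sum_le_sum fun m _ => h m

theorem exists_perm_forall_sum_take_mem_Icc {α : Type*} (φ : α → ℝ) {a b : α} {X : ℝ}
    (ha : φ a < 0) (hab : φ b - φ a ≤ X) (R B : ℕ) {g : ℝ} (hg : g ∈ Set.Icc 0 X)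
    (hend : g + R * φ a + B * φ b = 0) :
    ∃ l : List α, l.Perm (List.replicate R a ++ List.replicate B b) ∧
      ∀ k, g + ((l.take k).map φ).sum ∈ Set.Icc 0 X := by
  induction hn : R + B generalizing R B g with
  | zero =>
    obtain ⟨rfl, rfl⟩ : R = 0 ∧ B = 0 := by omega
    exact ⟨[], by simp, by simpa using hg⟩
  | succ n ih =>
    have prepend {c : α} {l' : List α}
        (hl' : ∀ k, g + φ c + ((l'.take k).map φ).sum ∈ Set.Icc 0 X) :
        ∀ k, g + (((c :: l').take k).map φ).sum ∈ Set.Icc 0 X := by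
      rintro (_ | k)
      · simpa using hg
      · simpa [add_assoc] using hl' k
    have hR := Nat.cast_nonneg (α := ℝ) R
    have hB := Nat.cast_nonneg (α := ℝ) B
    by_cases hsmall : 0 < R ∧ 0 ≤ g + φ a
    · obtain ⟨R, rfl⟩ : ∃ R', R = R' + 1 := ⟨R - 1, by omega⟩
      push_cast at hend
      obtain ⟨l', hperm, hl'⟩ := ih R B ⟨hsmall.2, by linarith [hg.2]⟩ (by linarith) (by omega)
      refine ⟨a :: l', ?_, prepend hl'⟩
      rw [List.replicate_succ, List.cons_append]
      exact hperm.cons a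
    · have hB0 : B ≠ 0 := by
        rintro rfl
        obtain ⟨R, rfl⟩ : ∃ R', R = R' + 1 := ⟨R - 1, by omega⟩
        push_cast at hend hR
        exact hsmall ⟨R.succ_pos, by nlinarith⟩
      obtain ⟨B, rfl⟩ := Nat.exists_eq_succ_of_ne_zero hB0
      push_cast at hend hB
      -- if `φ b < 0`, the remaining steps all go down and end at `0`
      have hlow : 0 ≤ g + φ b := by
        rcases le_or_gt 0 (φ b) with hb | hb
        · linarith [hg.1]
        · nlinarith
      have hhigh : g + φ b ≤ X := by
        rcases Nat.eq_zero_or_pos R with rfl | hR0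
        · push_cast at hend
          nlinarith [hg.1, hg.2]
        · linarith [not_le.1 fun h => hsmall ⟨hR0, h⟩]
      obtain ⟨l', hperm, hl'⟩ := ih R B ⟨hlow, hhigh⟩ (by linarith) (by omega)
      refine ⟨b :: l', ?_, prepend hl'⟩
      rw [List.replicate_succ]
      exact (hperm.cons b).trans List.perm_middle.symm

namespace SpectralTetris

open Complex in
noncomputable def dftBlock (l s : ℕ) (w : ℕ → ℝ) (n q : ℕ) : ℂ :=
  (√(w n / l) : ℝ) * exp (2 * Real.pi * I / l) ^ ((n - s) * q)

section DftBlock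

variable {l s : ℕ} {w : ℕ → ℝ}

theorem dftBlock_eq_zero {n : ℕ} (h : w n = 0) (q : ℕ) : dftBlock l s w n q = 0 := by
  simp [dftBlock, h]

theorem norm_dftBlock_sq {n : ℕ} (hw : 0 ≤ w n) (q : ℕ) : ‖dftBlock l s w n q‖ ^ 2 = w n / l := by
  rcases eq_or_ne l 0 with rfl | hl
  · simp [dftBlock]
  rw [dftBlock, norm_mul, norm_pow, (Complex.isPrimitiveRoot_exp l hl).norm'_eq_one hl, one_pow,
    mul_one, Complex.norm_real, Real.norm_eq_abs, sq_abs, Real.sq_sqrt (by positivity)]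

theorem sum_dftBlock_mul_conj (hw : ∀ n, 0 ≤ w n) (hsupp : ∀ n, w n ≠ 0 → n ∈ Ico s (s + l))
    (n n' : ℕ) :
    ∑ q ∈ range l, dftBlock l s w n q * conj (dftBlock l s w n' q) =
      if n = n' then (w n : ℂ) else 0 := by
  by_cases hzero : w n = 0 ∨ w n' = 0
  · have hterm (q : ℕ) : dftBlock l s w n q * conj (dftBlock l s w n' q) = 0 := by
      rcases hzero with h | h
      · rw [dftBlock_eq_zero h, zero_mul]
      · rw [dftBlock_eq_zero h, map_zero, mul_zero]
    simp only [hterm, sum_const_zero]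
    split_ifs with h
    · subst h; rw [or_self] at hzero; rw [hzero, Complex.ofReal_zero]
    · rfl
  rw [not_or] at hzero
  obtain ⟨hn₁, hn₂⟩ := mem_Ico.1 (hsupp n hzero.1)
  obtain ⟨hn'₁, hn'₂⟩ := mem_Ico.1 (hsupp n' hzero.2)
  have hl : 0 < l := by omega
  set ζ := Complex.exp (2 * Real.pi * Complex.I / l)
  have hterm (q : ℕ) : dftBlock l s w n q * conj (dftBlock l s w n' q) =
      ((√(w n / l) * √(w n' / l) : ℝ) : ℂ) * (ζ ^ ((n - s) * q) * conj (ζ ^ ((n' - s) * q))) := by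
    simp only [dftBlock, map_mul, Complex.conj_ofReal]; push_cast; ring
  simp only [hterm, ← mul_sum]
  rw [(Complex.isPrimitiveRoot_exp l hl.ne').sum_pow_mul_conj_pow (by omega) (by omega)]
  by_cases h : n = n'
  · subst h
    rw [if_pos rfl, if_pos rfl, Real.mul_self_sqrt (div_nonneg (hw n) (Nat.cast_nonneg _))]
    have : (l : ℂ) ≠ 0 := Nat.cast_ne_zero.2 hl.ne'
    push_cast
    field_simp
  · rw [if_neg (by omega), if_neg h, mul_zero]

end DftBlock

/-- Row `n` is the interval `[n x, (n + 1) x)`; this is the length of its overlap with `[0, c)`. -/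
def rowFill (x c : ℝ) (n : ℕ) : ℝ := min x (max 0 (c - n * x))

section RowFill

variable {x c c' : ℝ} {n : ℕ}

theorem rowFill_mono (h : c ≤ c') : rowFill x c n ≤ rowFill x c' n := by
  unfold rowFill; gcongr

theorem rowFill_of_le (hx : 0 ≤ x) (h : c ≤ n * x) : rowFill x c n = 0 := by
  rw [rowFill, max_eq_left (by linarith), min_eq_right hx]

theorem rowFill_of_ge (h : (n + 1) * x ≤ c) : rowFill x c n = x := by
  rw [rowFill, min_eq_left (le_max_of_le_right (by linarith))]

theorem sum_range_rowFill (hx : 0 ≤ x) (hc : 0 ≤ c) (N : ℕ) :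
    ∑ n ∈ range N, rowFill x c n = min c (N * x) := by
  induction N with
  | zero => simpa using hc
  | succ N ih =>
    rw [sum_range_succ, ih]
    rcases le_total c (N * x) with h | h
    · rw [rowFill_of_le hx h, min_eq_left h, min_eq_left (by push_cast; linarith), add_zero]
    · rw [min_eq_right h, rowFill, max_eq_right (by linarith)]
      push_cast
      rw [← min_add_add_left, add_sub_cancel, add_one_mul, min_comm]

end RowFill

section Blocks

variable (l : List ℕ)

def colStart (k : ℕ) : ℕ := (l.take k).sum

def rowStart (k : ℕ) : ℕ := colStart l k - k

def blockWeight (x : ℝ) (j n : ℕ) : ℝ :=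
  rowFill x (colStart l (j + 1)) n - rowFill x (colStart l j) n

/-- The mass `[colStart l j, colStart l (j + 1))` of block `j` lies in the rows
`rowStart l j, …, rowStart l j + l[j] - 1`. -/
def BlocksFit (x : ℝ) : Prop :=
  ∀ j (hj : j < l.length), (rowStart l j : ℝ) * x ≤ colStart l j ∧
    (colStart l (j + 1) : ℝ) ≤ (rowStart l j + l[j]) * x

variable {l} {x : ℝ} {n : ℕ}

theorem colStart_succ {j : ℕ} (hj : j < l.length) : colStart l (j + 1) = colStart l j + l[j] :=
  List.sum_take_succ l j hj

theorem colStart_mono {i j : ℕ} (h : i ≤ j) : colStart l i ≤ colStart l j :=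
  (List.take_prefix_take_left h).sublist.sum_le_sum fun _ _ => Nat.zero_le _

theorem colStart_le_sum (k : ℕ) : colStart l k ≤ l.sum :=
  (List.take_sublist k l).sum_le_sum fun _ _ => Nat.zero_le _

theorem blockWeight_nonneg (j n : ℕ) : 0 ≤ blockWeight l x j n :=
  sub_nonneg.2 (rowFill_mono (by exact_mod_cast colStart_mono j.le_succ))

theorem mem_Ico_of_blockWeight_ne_zero (hx : 0 ≤ x) (hfit : BlocksFit l x) {j : ℕ}
    (hj : j < l.length) (h : blockWeight l x j n ≠ 0) :
    n ∈ Ico (rowStart l j) (rowStart l j + l[j]) := by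
  have hc : (colStart l j : ℝ) ≤ colStart l (j + 1) := by exact_mod_cast colStart_mono j.le_succ
  obtain ⟨hlow, hhigh⟩ := hfit j hj
  rw [mem_Ico]
  by_contra hn
  rw [not_and_or, not_le, not_lt] at hn
  refine h (sub_eq_zero.2 ?_)
  rcases hn with hn | hn
  · have : ((n : ℝ) + 1) * x ≤ rowStart l j * x := by gcongr; exact_mod_cast hn
    rw [rowFill_of_ge (by linarith), rowFill_of_ge (by linarith)]
  · have : ((rowStart l j : ℝ) + l[j]) * x ≤ n * x := by gcongr; exact_mod_cast hn
    rw [rowFill_of_le hx (by linarith), rowFill_of_le hx (by linarith)]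

theorem sum_range_blockWeight (hx : 0 ≤ x) {N : ℕ} (hN : (l.sum : ℝ) ≤ N * x) {j : ℕ}
    (hj : j < l.length) : ∑ n ∈ range N, blockWeight l x j n = l[j] := by
  have hle (k : ℕ) : (colStart l k : ℝ) ≤ N * x :=
    le_trans (by exact_mod_cast colStart_le_sum k) hN
  simp only [blockWeight, sum_sub_distrib]
  rw [sum_range_rowFill hx (Nat.cast_nonneg _), sum_range_rowFill hx (Nat.cast_nonneg _),
    min_eq_left (hle _), min_eq_left (hle _), colStart_succ hj]
  push_cast; ring

theorem sum_blocks_blockWeight (hx : 0 ≤ x) {N : ℕ} (hN : (l.sum : ℝ) = N * x) (hn : n < N) :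
    ∑ j ∈ range l.length, blockWeight l x j n = x := by
  simp only [blockWeight]
  rw [sum_range_sub (fun j => rowFill x (colStart l j) n)]
  simp only [colStart, List.take_length, List.take_zero, List.sum_nil, Nat.cast_zero]
  rw [rowFill_of_ge, rowFill_of_le hx (by positivity), sub_zero]
  rw [hN]; gcongr; exact_mod_cast hn

end Blocks

noncomputable def blockMatrix (l : List ℕ) (N : ℕ) (x : ℝ) :
    Matrix (Fin N) ((j : Fin l.length) × Fin l[(j : ℕ)]) ℂ :=
  fun n jq => dftBlock l[(jq.1 : ℕ)] (rowStart l jq.1) (blockWeight l x jq.1) n jq.2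

section BlockMatrix

variable {l : List ℕ} {x : ℝ} (hx : 0 ≤ x)
include hx

theorem sum_norm_blockMatrix_sq {N : ℕ} (hN : (l.sum : ℝ) = N * x)
    (jq : (j : Fin l.length) × Fin l[(j : ℕ)]) : ∑ n, ‖blockMatrix l N x n jq‖ ^ 2 = 1 := by
  obtain ⟨j, q⟩ := jq
  have hl : (l[(j : ℕ)] : ℝ) ≠ 0 := Nat.cast_ne_zero.2 (Fin.pos q).ne'
  simp only [blockMatrix, norm_dftBlock_sq (blockWeight_nonneg _ _)]
  rw [Fin.sum_univ_eq_sum_range (fun n => blockWeight l x j n / l[(j : ℕ)]) N, ← sum_div,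
    sum_range_blockWeight hx hN.le j.2, div_self hl]

theorem blockMatrix_mul_conjTranspose (hfit : BlocksFit l x) {N : ℕ}
    (hN : (l.sum : ℝ) = N * x) : blockMatrix l N x * (blockMatrix l N x)ᴴ = (x : ℂ) • 1 := by
  ext n n'
  have hblock (j : Fin l.length) :
      ∑ q : Fin l[(j : ℕ)], blockMatrix l N x n ⟨j, q⟩ * star (blockMatrix l N x n' ⟨j, q⟩) =
        if n = n' then (blockWeight l x j n : ℂ) else 0 := by
    simp only [blockMatrix, Complex.star_def]
    set D := dftBlock l[(j : ℕ)] (rowStart l j) (blockWeight l x j)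
    rw [Fin.sum_univ_eq_sum_range (fun q => D n q * conj (D n' q)), sum_dftBlock_mul_conj (blockWeight_nonneg _)
        (fun _ => mem_Ico_of_blockWeight_ne_zero hx hfit j.2)]
    simp [Fin.val_inj]
  simp only [Matrix.mul_apply, Matrix.conjTranspose_apply, Fintype.sum_sigma, hblock,
    Matrix.smul_apply, Matrix.one_apply, smul_eq_mul, mul_ite, mul_one, mul_zero]
  split_ifs
  · rw [Fin.sum_univ_eq_sum_range (fun j => (blockWeight l x j n : ℂ)), ← Complex.ofReal_sum,
      sum_blocks_blockWeight hx hN n.2]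
  · exact sum_const_zero

theorem card_blockMatrix_ne_zero_le (hfit : BlocksFit l x) {N : ℕ}
    (jq : (j : Fin l.length) × Fin l[(j : ℕ)]) :
    #{n | blockMatrix l N x n jq ≠ 0} ≤ l[(jq.1 : ℕ)] := by
  obtain ⟨j, q⟩ := jq
  calc #{n | blockMatrix l N x n ⟨j, q⟩ ≠ 0}
      ≤ #(Ico (rowStart l j) (rowStart l j + l[(j : ℕ)])) := by
        refine card_le_card_of_injOn Fin.val (fun n hn => ?_) Fin.val_injective.injOn
        refine mem_Ico_of_blockWeight_ne_zero hx hfit j.2 fun h => ?_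
        exact (mem_filter.1 hn).2 (dftBlock_eq_zero h q)
    _ = l[(j : ℕ)] := by simp

end BlockMatrix

theorem exists_sparse_unitNormTightFrame {N M : ℕ} (hN : 0 < N) {l : List ℕ} (hM : l.sum = M)
    (hfit : BlocksFit l (M / N)) :
    ∃ A : Matrix (Fin N) (Fin M) ℂ,
      (∀ m, ∑ n, ‖A n m‖ ^ 2 = 1) ∧
      A * Aᴴ = ((M : ℂ) / N) • 1 ∧
      {p : Fin N × Fin M | A p.1 p.2 ≠ 0}.ncard ≤ (l.map (· ^ 2)).sum := by
  have hx : (0 : ℝ) ≤ M / N := by positivity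
  have hsum : (l.sum : ℝ) = N * (M / N) := by
    rw [hM, mul_div_cancel₀ _ (Nat.cast_ne_zero.2 hN.ne')]
  let e : Fin M ≃ (j : Fin l.length) × Fin l[(j : ℕ)] :=
    (finSigmaFinEquiv.trans (finCongr (by rw [Fin.sum_univ_getElem, hM]))).symm
  refine ⟨(blockMatrix l N (M / N)).submatrix id e,
    fun m => sum_norm_blockMatrix_sq hx hsum (e m), ?_, ?_⟩
  · rw [Matrix.conjTranspose_submatrix, Matrix.submatrix_mul_equiv, Matrix.submatrix_id_id,
      blockMatrix_mul_conjTranspose hx hfit hsum]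
    push_cast; rfl
  · refine (Matrix.ncard_ne_zero_le_sum _
      fun m => card_blockMatrix_ne_zero_le hx hfit (e m)).trans_eq ?_
    rw [e.sum_comp (fun jq => l[(jq.1 : ℕ)]), Fintype.sum_sigma, ← Fin.sum_univ_fun_getElem]
    refine sum_congr rfl fun j _ => ?_
    show ∑ _q : Fin l[(j : ℕ)], l[(j : ℕ)] = _
    rw [sum_const, card_univ, Fintype.card_fin, smul_eq_mul, sq]

/-- After the first `k` blocks, the row shared with the next block still lacks
`(rowStart l k + 1) * x - colStart l k` of its mass; a further block of `a` columns changes this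
by `tetrisStep x a`. -/
noncomputable def tetrisStep (x : ℝ) (a : ℕ) : ℝ := ((a : ℝ) - 1) * x - a

theorem sum_map_tetrisStep (x : ℝ) (t : List ℕ) :
    (t.map (tetrisStep x)).sum = ((t.sum : ℝ) - t.length) * x - t.sum := by
  induction t with
  | nil => simp
  | cons a t ih =>
    simp only [List.map_cons, List.sum_cons, List.length_cons, ih, tetrisStep]
    push_cast; ring

theorem blocksFit_of_forall_mem_Icc {x : ℝ} {l : List ℕ} (hpos : ∀ a ∈ l, 1 ≤ a)
    (h : ∀ k, x + ((l.take k).map (tetrisStep x)).sum ∈ Set.Icc 0 x) : BlocksFit l x := by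
  intro j hj
  have hwalk {k : ℕ} (hk : k ≤ l.length) : x + ((l.take k).map (tetrisStep x)).sum =
      ((colStart l k : ℝ) - k + 1) * x - colStart l k := by
    rw [sum_map_tetrisStep, List.length_take_of_le hk, colStart]; ring
  have hrow : (rowStart l j : ℝ) = colStart l j - j := by
    have hle : j ≤ colStart l j := by
      have := (l.take j).length_le_sum_of_one_le fun a ha => hpos a (List.mem_of_mem_take ha)
      rwa [List.length_take_of_le hj.le] at this
    rw [rowStart, Nat.cast_sub hle]
  have hj₁ := (h j).2
  have hj₂ := (h (j + 1)).1
  rw [hwalk hj.le] at hj₁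
  rw [hwalk hj, colStart_succ hj] at hj₂
  rw [colStart_succ hj, hrow]
  push_cast at hj₂ ⊢
  constructor <;> linarith

theorem mul_add_tsub_mul_succ_eq {K L M r : ℕ} (hLK : K * L ≤ M) (hML : M ≤ K * (L + 1))
    (hr : r = K * (L + 1) - M) : r * L + (K - r) * (L + 1) = M := by
  have e : K * (L + 1) = K * L + K := by ring
  obtain ⟨b, rfl⟩ := Nat.exists_eq_add_of_le (show r ≤ K by omega)
  rw [Nat.add_sub_cancel_left]
  have : (r + b) * (L + 1) = r * L + b * L + r + b := by ring
  have : b * (L + 1) = b * L + b := by ring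
  omega

theorem exists_blocksFit {N M K L r : ℕ} (hN : 0 < N) (h1 : N < M) (hK : K = M - N + 1)
    (hL : L = M / K) (hr : r = K * (L + 1) - M) :
    ∃ l : List ℕ, l.sum = M ∧ (l.map (· ^ 2)).sum = r * L ^ 2 + (K - r) * (L + 1) ^ 2 ∧
      BlocksFit l (M / N) := by
  have hK0 : 0 < K := by omega
  have hLK : K * L ≤ M := hL ▸ Nat.mul_div_le M K
  have hML : M < K * (L + 1) := hL ▸ Nat.lt_mul_div_succ M hK0
  have hL1 : 1 ≤ L := hL ▸ (Nat.le_div_iff_mul_le hK0).2 (by omega)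
  have hrK : r ≤ K := by
    have : K * (L + 1) = K * L + K := by ring
    omega
  have hcount := mul_add_tsub_mul_succ_eq hLK hML.le hr
  set x : ℝ := M / N
  have hNx : (N : ℝ) * x = M := mul_div_cancel₀ _ (Nat.cast_ne_zero.2 hN.ne')
  have hKr : (K : ℝ) = M - N + 1 := by rw [hK]; push_cast [h1.le]; ring
  have hstep : tetrisStep x L < 0 := by
    have hLKr : (K : ℝ) * L ≤ M := by exact_mod_cast hLK
    have hL1' : (1 : ℝ) ≤ L := by exact_mod_cast hL1
    have : (N : ℝ) * tetrisStep x L = K * L - L - M := by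
      rw [tetrisStep]; linear_combination ((L : ℝ) - 1) * hNx - (L : ℝ) * hKr
    exact neg_of_mul_neg_right (by linarith) (Nat.cast_nonneg N)
  have hend : x + r * tetrisStep x L + (K - r : ℕ) * tetrisStep x (L + 1) = 0 := by
    have hrep := sum_map_tetrisStep x (List.replicate r L ++ List.replicate (K - r) (L + 1))
    simp only [List.map_append, List.map_replicate, List.sum_append, List.sum_replicate,
      List.length_append, List.length_replicate, nsmul_eq_mul, smul_eq_mul, hcount,
      Nat.add_sub_cancel' hrK] at hrep
    linear_combination hrep - x * hKr + hNx
  obtain ⟨l, hperm, hwalk⟩ := exists_perm_forall_sum_take_mem_Icc (tetrisStep x) hstep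
    (by rw [tetrisStep, tetrisStep]; push_cast; linarith) r (K - r) ⟨by positivity, le_rfl⟩ hend
  refine ⟨l, ?_, ?_, blocksFit_of_forall_mem_Icc (fun a ha => ?_) hwalk⟩
  · rw [hperm.sum_eq]; simpa using hcount
  · rw [(hperm.map _).sum_eq]; simp
  · rcases List.mem_append.1 (hperm.mem_iff.1 ha) with ha | ha <;>
      · rw [List.eq_of_mem_replicate ha]; omega

end SpectralTetris

open SpectralTetris in
theorem sparse_low_redundancy_tight_frame_general (N M : ℕ)
    (hN : 0 < N) (h1 : N < M)
    (K L r : ℕ) (hK : K = M - N + 1) (hL : L = M / K) (hr : r = K * (L + 1) - M) :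
    ∃ A : Matrix (Fin N) (Fin M) ℂ,
      (∀ m : Fin M, ∑ n : Fin N, ‖A n m‖ ^ 2 = 1) ∧
      A * A.conjTranspose = ((M : ℂ) / (N : ℂ)) • 1 ∧
      {p : Fin N × Fin M | A p.1 p.2 ≠ 0}.ncard ≤ r * L ^ 2 + (K - r) * (L + 1) ^ 2 := by
  obtain ⟨l, hsum, hsq, hfit⟩ := exists_blocksFit hN h1 hK hL hr
  obtain ⟨A, hcol, hgram, hsupp⟩ := exists_sparse_unitNormTightFrame hN hsum hfit
  exact ⟨A, hcol, hgram, hsupp.trans_eq hsq⟩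

/-- Let `M, N` be relatively prime with `N < M < 2N`, `K = M − N + 1`,
`L = ⌊M/K⌋` and `r = K(L+1) − M`.  Then there is an `M`-element unit norm tight
frame for `ℂ^N` (given by the columns of an `N × M` synthesis matrix `A` with
unit-norm columns and `A Aᴴ = (M/N) I`) whose synthesis matrix has at most
`rL² + (K−r)(L+1)²` nonzero entries. -/
theorem sparse_low_redundancy_tight_frame (N M : ℕ) (hcop : Nat.Coprime M N)
    (hN : 0 < N) (h1 : N < M) (h2 : M < 2 * N)
    (K L r : ℕ) (hK : K = M - N + 1) (hL : L = M / K) (hr : r = K * (L + 1) - M) :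
    ∃ A : Matrix (Fin N) (Fin M) ℂ,
      (∀ m : Fin M, ∑ n : Fin N, ‖A n m‖ ^ 2 = 1) ∧
      A * A.conjTranspose = ((M : ℂ) / (N : ℂ)) • 1 ∧
      {p : Fin N × Fin M | A p.1 p.2 ≠ 0}.ncard ≤ r * L ^ 2 + (K - r) * (L + 1) ^ 2 :=
  sparse_low_redundancy_tight_frame_general N M hN h1 K L r hK hL hr
end

section
/- Let N < M < 2N be positive integers, g = gcd(M,N), M' = M/g, N' = N/g, K' = M' − N' + 1, L' = ⌊M'/K'⌋, and r' = K'(L'+1) − M'. Then there exists a matrix A ∈ ℂ^{N×M} such that every column of A has norm 1, A·Aᴴ = (M/N)·I_N, and A has at most g·(r'L'² + (K'−r')(L'+1)²) nonzero entries. -/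
/-!
For `N < M` put `k = M - N` and cut the `M` columns into `k + 1` consecutive blocks of lengths
`s i ∈ {L, L + 1}`, starting at `S i`. Lay the `N` rows, as intervals of length `M`, and the blocks,
as intervals of length `N * s i`, side by side on `[0, N * M]`. The entry of row `r` in column `p`
of block `i` is `√(|row r ∩ block i| / (N * s i)) * ζ ^ (r * p)` with `ζ` a primitive `s i`-th
root of unity. Counting the overlaps by blocks and by rows gives unit columns and rows of squared
norm `M / N`. If the blocks satisfy `k * S i ≤ i * M ≤ k * S (i + 1)`, the rows meeting block `i`
are at most `s i` consecutive ones, so the characters `p ↦ ζ ^ (r * p)` make distinct rows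
orthogonal, and each column of block `i` has at most `s i` nonzero entries. For general `M, N`,
take `gcd M N` copies of this matrix for `M / gcd M N, N / gcd M N` as diagonal blocks.
-/

open Finset Matrix Complex Real

namespace Matrix

variable {m n m' n' o : Type*} [Fintype m] [Fintype n] [Fintype m'] [Fintype n'] [Fintype o]

def IsUnitNormTightFrame [DecidableEq m] (A : Matrix m n ℂ) (c : ℂ) : Prop :=
  (∀ j, ∑ i, ‖A i j‖ ^ 2 = 1) ∧ A * Aᴴ = c • 1

noncomputable def nnz {α : Type*} [Zero α] (A : Matrix m n α) : ℕ :=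
  {p : m × n | A p.1 p.2 ≠ 0}.ncard

section

variable {α : Type*} [Zero α]

open Classical in
theorem nnz_eq_sum_card_col (A : Matrix m n α) : A.nnz = ∑ j, #{i | A i j ≠ 0} := by
  rw [nnz, Set.ncard_eq_toFinset_card', Set.toFinset_ofPred, card_filter,
    Fintype.sum_prod_type_right]
  simp only [card_filter]

theorem nnz_reindex (e : m ≃ m') (f : n ≃ n') (A : Matrix m n α) :
    (reindex e f A).nnz = A.nnz := by
  classical
  rw [nnz_eq_sum_card_col, nnz_eq_sum_card_col, ← f.sum_comp]
  refine sum_congr rfl fun j _ => ?_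
  simp only [reindex_apply, submatrix_apply, Equiv.symm_apply_apply, card_filter]
  exact e.symm.sum_comp fun i => if A i j ≠ 0 then 1 else 0

theorem nnz_blockDiagonal [DecidableEq o] (A : Matrix m n α) :
    (blockDiagonal fun _ : o => A).nnz = Fintype.card o * A.nnz := by
  classical
  rw [nnz_eq_sum_card_col, nnz_eq_sum_card_col, Fintype.sum_prod_type_right, ← card_univ,
    ← smul_eq_mul, ← sum_const]
  refine sum_congr rfl fun k _ => sum_congr rfl fun j _ => ?_
  rw [card_filter, card_filter, Fintype.sum_prod_type_right, sum_eq_single k]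
  · simp [blockDiagonal_apply]
  · intro k' _ hk
    simp [blockDiagonal_apply, hk]
  · simp

end

namespace IsUnitNormTightFrame

variable [DecidableEq m] {A : Matrix m n ℂ} {c : ℂ}

theorem reindex [DecidableEq m'] (hA : A.IsUnitNormTightFrame c) (e : m ≃ m') (f : n ≃ n') :
    (reindex e f A).IsUnitNormTightFrame c := by
  refine ⟨fun j => ?_, ?_⟩
  · simpa only [reindex_apply, submatrix_apply] using
      (e.symm.sum_comp fun i => ‖A i (f.symm j)‖ ^ 2).trans (hA.1 _)
  · rw [conjTranspose_reindex, reindex_apply, reindex_apply, submatrix_mul_equiv, hA.2]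
    simp [submatrix_smul]

theorem blockDiagonal [DecidableEq o] (hA : A.IsUnitNormTightFrame c) :
    (blockDiagonal fun _ : o => A).IsUnitNormTightFrame c := by
  refine ⟨fun j => ?_, ?_⟩
  · rw [Fintype.sum_prod_type_right, sum_eq_single j.2 ?_ (by simp)]
    · simpa [blockDiagonal_apply] using hA.1 j.1
    · intro k _ hk
      simp [blockDiagonal_apply, hk]
  · rw [blockDiagonal_conjTranspose, ← blockDiagonal_mul, hA.2, ← blockDiagonal_one]
    simp only [← Pi.smul_def, blockDiagonal_smul]
    rfl

theorem exists_fin_of_card_eq (hA : A.IsUnitNormTightFrame c)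
    {N M : ℕ} (hN : Fintype.card m = N) (hM : Fintype.card n = M) :
    ∃ B : Matrix (Fin N) (Fin M) ℂ, B.IsUnitNormTightFrame c ∧ B.nnz = A.nnz :=
  ⟨Matrix.reindex (Fintype.equivFinOfCardEq hN) (Fintype.equivFinOfCardEq hM) A,
    hA.reindex _ _, nnz_reindex _ _ _⟩

end IsUnitNormTightFrame

end Matrix

noncomputable def dftRoot (s : ℕ) : ℂ := exp (2 * π * I / s)

theorem dftRoot_ne_zero (s : ℕ) : dftRoot s ≠ 0 := Complex.exp_ne_zero _

theorem norm_dftRoot (s : ℕ) : ‖dftRoot s‖ = 1 := by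
  rcases eq_or_ne s 0 with rfl | hs
  · simp [dftRoot]
  · exact (isPrimitiveRoot_exp s hs).norm'_eq_one hs

theorem dftRoot_pow_mul_conj_pow (s a b : ℕ) :
    dftRoot s ^ a * starRingEnd ℂ (dftRoot s ^ b) = dftRoot s ^ ((a : ℤ) - b) := by
  rw [map_pow, ← inv_eq_conj (norm_dftRoot s), zpow_sub₀ (dftRoot_ne_zero s),
    zpow_natCast, zpow_natCast, div_eq_mul_inv, inv_pow]

theorem sum_range_dftRoot_zpow_pow {s a b : ℕ} (hab : ¬ a ≡ b [MOD s]) :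
    ∑ p ∈ range s, (dftRoot s ^ ((a : ℤ) - b)) ^ p = 0 := by
  rcases eq_or_ne s 0 with rfl | hs
  · simp
  have hζ : IsPrimitiveRoot (dftRoot s) s := isPrimitiveRoot_exp s hs
  have hne : dftRoot s ^ ((a : ℤ) - b) ≠ 1 := by
    rwa [Ne, hζ.zpow_eq_one_iff_dvd, ← dvd_neg, neg_sub, ← Nat.modEq_iff_dvd]
  rw [geom_sum_eq hne, ← zpow_natCast, ← _root_.zpow_mul, mul_comm, _root_.zpow_mul,
    zpow_natCast, hζ.pow_eq_one, _root_.one_zpow, sub_self, zero_div]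

section BlockDFT

variable {ι : Type*} {R : ℕ} (s : ι → ℕ) (w : ι → Fin R → ℝ)

noncomputable def blockDFT : Matrix (Fin R) ((i : ι) × Fin (s i)) ℂ :=
  of fun r x => (√(w x.1 r) : ℂ) * dftRoot (s x.1) ^ ((r : ℕ) * x.2)

variable {s w}

theorem norm_blockDFT_sq {r : Fin R} {x : (i : ι) × Fin (s i)} (hw : 0 ≤ w x.1 r) :
    ‖blockDFT s w r x‖ ^ 2 = w x.1 r := by
  rw [blockDFT, of_apply, norm_mul, norm_pow, norm_dftRoot, one_pow, mul_one,
    norm_real, Real.norm_of_nonneg (Real.sqrt_nonneg _), Real.sq_sqrt hw]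

variable [Fintype ι]

theorem blockDFT_mul_conjTranspose_apply (r r' : Fin R) :
    (blockDFT s w * (blockDFT s w)ᴴ) r r' = ∑ i, ((√(w i r) * √(w i r') : ℝ) : ℂ) *
      ∑ p ∈ range (s i), (dftRoot (s i) ^ ((r : ℤ) - (r' : ℕ))) ^ p := by
  rw [mul_apply, Fintype.sum_sigma]
  refine sum_congr rfl fun i _ => ?_
  rw [mul_sum, ← Fin.sum_univ_eq_sum_range]
  refine sum_congr rfl fun p _ => ?_
  have hroot : dftRoot (s i) ^ ((r : ℕ) * p) * starRingEnd ℂ (dftRoot (s i) ^ ((r' : ℕ) * p)) =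
      (dftRoot (s i) ^ ((r : ℤ) - (r' : ℕ))) ^ (p : ℕ) := by
    rw [dftRoot_pow_mul_conj_pow, ← zpow_natCast, ← _root_.zpow_mul]
    push_cast
    ring_nf
  rw [conjTranspose_apply, blockDFT, of_apply, of_apply, star_def, map_mul, conj_ofReal,
    mul_mul_mul_comm, hroot, ofReal_mul]

/-- Rows of positive weight in block `i` are distinct modulo `s i`, so the characters
`p ↦ dftRoot (s i) ^ (r * p)` of those rows are orthogonal. -/
theorem isUnitNormTightFrame_blockDFT {c : ℝ} (hw : ∀ i r, 0 ≤ w i r) (hcol : ∀ i, ∑ r, w i r = 1)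
    (hrow : ∀ r, ∑ i, s i * w i r = c)
    (hsupp : ∀ i, Set.InjOn (fun r : Fin R => (r : ℕ) % s i) {r | w i r ≠ 0}) :
    (blockDFT s w).IsUnitNormTightFrame c := by
  refine ⟨fun x => ?_, ?_⟩
  · simp_rw [norm_blockDFT_sq (hw _ _), hcol]
  ext r r'
  rw [blockDFT_mul_conjTranspose_apply, Matrix.smul_apply, one_apply]
  split_ifs with h
  · subst h
    simp_rw [sub_self, zpow_zero, one_pow, sum_const, card_range, ← Real.sqrt_mul (hw _ _),
      Real.sqrt_mul_self (hw _ _)]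
    rw [← hrow r, smul_eq_mul, mul_one, ofReal_sum]
    simp [mul_comm]
  · rw [smul_zero]
    refine sum_eq_zero fun i _ => ?_
    by_cases hr : w i r = 0
    · simp [hr]
    by_cases hr' : w i r' = 0
    · simp [hr']
    rw [sum_range_dftRoot_zpow_pow (fun hmod => h (hsupp i hr hr' hmod)), mul_zero]

theorem nnz_blockDFT_le (hsupp : ∀ i, Set.InjOn (fun r : Fin R => (r : ℕ) % s i) {r | w i r ≠ 0}) :
    (blockDFT s w).nnz ≤ ∑ i, s i ^ 2 := by
  classical
  calc (blockDFT s w).nnz ≤ ∑ x : (i : ι) × Fin (s i), s x.1 := by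
        rw [nnz_eq_sum_card_col]
        refine sum_le_sum fun x _ => ?_
        calc #{r | blockDFT s w r x ≠ 0} ≤ #{r | w x.1 r ≠ 0} :=
              card_le_card fun r => by
                simp only [mem_filter, mem_univ, true_and]
                exact mt fun hw => by simp [blockDFT, hw]
          _ ≤ #(range (s x.1)) := card_le_card_of_injOn (fun r : Fin R => (r : ℕ) % s x.1)
                (fun r _ => by simpa using Nat.mod_lt _ x.2.pos) (by simpa using hsupp x.1)
          _ = s x.1 := card_range _
    _ = ∑ i, s i ^ 2 := by simp [Fintype.sum_sigma, sq]

end BlockDFT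

def overlap (a b c d : ℕ) : ℕ := min b d - max a c

theorem overlap_comm (a b c d : ℕ) : overlap a b c d = overlap c d a b := by
  simp only [overlap, min_comm, max_comm]

theorem overlap_of_le {a b c d : ℕ} (hac : a ≤ c) (hcd : c ≤ d) (hdb : d ≤ b) :
    overlap a b c d = d - c := by
  simp only [overlap]
  omega

theorem lt_of_overlap_pos {a b c d : ℕ} (h : 0 < overlap a b c d) : a < d ∧ c < b := by
  simp only [overlap] at h
  omega

theorem sum_range_overlap {f : ℕ → ℕ} (hf : Monotone f) {c d : ℕ} (hcd : c ≤ d) (n : ℕ) :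
    ∑ i ∈ range n, overlap (f i) (f (i + 1)) c d = overlap (f 0) (f n) c d := by
  have hclamp : ∀ i j, i ≤ j →
      overlap (f i) (f j) c d = min d (max c (f j)) - min d (max c (f i)) := by
    intro i j hij
    have := hf hij
    simp only [overlap]
    omega
  rw [hclamp 0 n n.zero_le, ← sum_range_tsub (f := fun i => min d (max c (f i)))
    (fun i j hij => min_le_min_left _ (max_le_max_left _ (hf hij)))]
  exact sum_congr rfl fun i _ => hclamp i (i + 1) i.le_succ

/-- The number of blocks of length `L + 1` among the first `i`. Putting all long blocks first, or
all last, violates the tube condition in general; the cap `i * (L + c) / k` spreads them out. -/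
def longBlocks (k L c i : ℕ) : ℕ := min (i * (L + c) / k) (min i c)

def blockStart (k L c i : ℕ) : ℕ := i * L + longBlocks k L c i

def blockLen (k L c i : ℕ) : ℕ := blockStart k L c (i + 1) - blockStart k L c i

section Blocks

variable {k L c : ℕ}

theorem longBlocks_le_succ (i : ℕ) : longBlocks k L c i ≤ longBlocks k L c (i + 1) := by
  have : i * (L + c) / k ≤ (i + 1) * (L + c) / k := Nat.div_le_div_right (by gcongr; omega)
  simp only [longBlocks]
  omega

theorem longBlocks_succ_le (hk : 0 < k) (i : ℕ) :
    longBlocks k L c (i + 1) ≤ longBlocks k L c i + 1 := by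
  simp only [longBlocks]
  rcases le_or_gt k (L + c) with hkD | hDk
  · have h : ∀ j, j ≤ j * (L + c) / k := fun j =>
      (Nat.le_div_iff_mul_le hk).2 (Nat.mul_le_mul_left j hkD)
    have := h i
    have := h (i + 1)
    omega
  · have : (i + 1) * (L + c) / k ≤ i * (L + c) / k + 1 := by
      rw [← Nat.add_div_right _ hk]
      exact Nat.div_le_div_right (by rw [add_mul, one_mul]; omega)
    omega

theorem blockStart_zero : blockStart k L c 0 = 0 := by simp [blockStart, longBlocks]

theorem blockStart_mono : Monotone (blockStart k L c) :=
  monotone_nat_of_le_succ fun i => by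
    have := longBlocks_le_succ (k := k) (L := L) (c := c) i
    simp only [blockStart, add_mul, one_mul]
    omega

theorem blockLen_eq_or (hk : 0 < k) (i : ℕ) : blockLen k L c i = L ∨ blockLen k L c i = L + 1 := by
  have := longBlocks_le_succ (k := k) (L := L) (c := c) i
  have := longBlocks_succ_le (L := L) (c := c) hk i
  simp only [blockLen, blockStart, add_mul, one_mul]
  omega

theorem blockStart_last (hk : 0 < k) (hc : c ≤ k) : blockStart k L c (k + 1) = (k + 1) * L + c := by
  have : c ≤ (k + 1) * (L + c) / k :=
    (Nat.le_div_iff_mul_le hk).2 (by nlinarith)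
  simp only [blockStart, longBlocks]
  omega

theorem mul_blockStart_le (i : ℕ) : k * blockStart k L c i ≤ i * ((k + 1) * L + c) := by
  have : k * longBlocks k L c i ≤ i * (L + c) :=
    (Nat.mul_le_mul_left k (min_le_left _ _)).trans (Nat.mul_div_le _ _)
  simp only [blockStart]
  nlinarith

theorem le_mul_blockStart_succ (hk : 0 < k) (hL : 0 < L) (hc : c ≤ k) {i : ℕ} (hi : i ≤ k) :
    i * ((k + 1) * L + c) ≤ k * blockStart k L c (i + 1) := by
  simp only [blockStart, longBlocks]
  rcases min_choice ((i + 1) * (L + c) / k) (min (i + 1) c) with h | h <;> rw [h]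
  · have := Nat.lt_mul_div_succ ((i + 1) * (L + c)) hk
    nlinarith
  · have := Nat.mul_le_mul_right L hi
    have := Nat.mul_le_mul_left i hc
    rcases min_choice (i + 1) c with h' | h' <;> rw [h'] <;> nlinarith

end Blocks

theorem mem_Ico_of_overlap_pos {N k S S' r i : ℕ} (hS : k * S ≤ i * (N + k))
    (hS' : i * (N + k) ≤ k * S')
    (h : 0 < overlap (S * N) (S' * N) (r * (N + k)) ((r + 1) * (N + k))) :
    r + i ∈ Set.Ico S S' := by
  obtain ⟨h₁, h₂⟩ := lt_of_overlap_pos h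
  constructor
  · have : S * (N + k) < (r + i + 1) * (N + k) := by nlinarith
    have := Nat.lt_of_mul_lt_mul_right this
    omega
  · have : (r + i) * (N + k) < S' * (N + k) := by nlinarith
    exact Nat.lt_of_mul_lt_mul_right this

/-- The tube condition `mul_le`, `le_mul` forces the rows meeting block `i` into a window of
`S (i + 1) - S i` consecutive rows. -/
structure IsTubePartition (N k K : ℕ) (S : ℕ → ℕ) : Prop where
  strictMono : StrictMono S
  zero : S 0 = 0
  last : S K = N + k
  mul_le : ∀ i < K, k * S i ≤ i * (N + k)
  le_mul : ∀ i < K, i * (N + k) ≤ k * S (i + 1)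

/-- Row `r` is the interval `[r * (N + k), (r + 1) * (N + k)]` and block `i` the interval
`[S i * N, S (i + 1) * N]`; the weight is their overlap, normalised so that columns have
norm `1`. -/
noncomputable def tubeWeight (N k : ℕ) (S : ℕ → ℕ) (i r : ℕ) : ℝ :=
  overlap (S i * N) (S (i + 1) * N) (r * (N + k)) ((r + 1) * (N + k)) / (N * (S (i + 1) - S i) : ℕ)

noncomputable def tubeFrame (N k K : ℕ) (S : ℕ → ℕ) :
    Matrix (Fin N) ((i : Fin K) × Fin (S (i + 1) - S i)) ℂ :=
  blockDFT (fun i : Fin K => S (i + 1) - S i) (fun i r => tubeWeight N k S i r)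

namespace IsTubePartition

variable {N k K : ℕ} {S : ℕ → ℕ} (hS : IsTubePartition N k K S)
include hS

theorem le_last {i : ℕ} (hi : i ≤ K) : S i ≤ N + k := hS.last ▸ hS.strictMono.monotone hi

theorem sum_overlap_rows {i : ℕ} (hi : i < K) :
    ∑ r ∈ range N, overlap (S i * N) (S (i + 1) * N) (r * (N + k)) ((r + 1) * (N + k)) =
      (S (i + 1) - S i) * N := by
  simp_rw [overlap_comm (S i * N)]
  rw [sum_range_overlap (fun a b h => Nat.mul_le_mul_right _ h)
      (Nat.mul_le_mul_right _ (hS.strictMono.monotone i.le_succ)), overlap_of_le (by simp)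
      (Nat.mul_le_mul_right _ (hS.strictMono.monotone i.le_succ)), Nat.sub_mul]
  rw [mul_comm N]
  exact Nat.mul_le_mul_right _ (hS.le_last hi)

theorem sum_overlap_blocks {r : ℕ} (hr : r < N) :
    ∑ i ∈ range K, overlap (S i * N) (S (i + 1) * N) (r * (N + k)) ((r + 1) * (N + k)) = N + k := by
  rw [sum_range_overlap (fun a b h => Nat.mul_le_mul_right _ (hS.strictMono.monotone h))
      (by gcongr; omega), hS.zero, hS.last, overlap_of_le (by simp) (by gcongr; omega)
      (by rw [mul_comm]; gcongr; omega)]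
  rw [add_mul, one_mul, Nat.add_sub_cancel_left]

theorem sum_tubeWeight (hN : 0 < N) {i : ℕ} (hi : i < K) :
    ∑ r : Fin N, tubeWeight N k S i r = 1 := by
  have hlen : 0 < S (i + 1) - S i := Nat.sub_pos_of_lt (hS.strictMono i.lt_succ_self)
  simp only [tubeWeight, ← sum_div]
  rw [div_eq_one_iff_eq (by positivity), Fin.sum_univ_eq_sum_range
    (fun r => (overlap (S i * N) (S (i + 1) * N) (r * (N + k)) ((r + 1) * (N + k)) : ℝ)),
    ← Nat.cast_sum, hS.sum_overlap_rows hi, mul_comm]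

theorem sum_mul_tubeWeight (hN : 0 < N) {r : ℕ} (hr : r < N) :
    ∑ i : Fin K, ((S (i + 1) - S i : ℕ) : ℝ) * tubeWeight N k S i r = (N + k : ℕ) / N := by
  have hterm : ∀ i : Fin K, ((S (i + 1) - S i : ℕ) : ℝ) * tubeWeight N k S i r =
      overlap (S i * N) (S (i + 1) * N) (r * (N + k)) ((r + 1) * (N + k)) / N := by
    intro i
    have hlen : 0 < S (i + 1) - S i := Nat.sub_pos_of_lt (hS.strictMono (i : ℕ).lt_succ_self)
    rw [tubeWeight, Nat.cast_mul]
    field_simp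
  simp_rw [hterm, ← sum_div]
  rw [Fin.sum_univ_eq_sum_range
    (fun i => (overlap (S i * N) (S (i + 1) * N) (r * (N + k)) ((r + 1) * (N + k)) : ℝ)),
    ← Nat.cast_sum, hS.sum_overlap_blocks hr]

theorem injOn_support_tubeWeight {i : ℕ} (hi : i < K) :
    Set.InjOn (fun r : Fin N => (r : ℕ) % (S (i + 1) - S i)) {r | tubeWeight N k S i r ≠ 0} := by
  have hrow : ∀ r : ℕ, tubeWeight N k S i r ≠ 0 → r + i ∈ Set.Ico (S i) (S (i + 1)) := by
    intro r hr
    refine mem_Ico_of_overlap_pos (hS.mul_le i hi) (hS.le_mul i hi) (Nat.pos_of_ne_zero ?_)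
    intro h
    simp [tubeWeight, h] at hr
  intro r hr r' hr' hmod
  have h₁ := hrow r hr
  have h₂ := hrow r' hr'
  refine Fin.ext (Nat.ModEq.eq_of_abs_lt hmod ?_)
  simp only [Set.mem_Ico] at h₁ h₂
  rw [abs_sub_lt_iff]
  omega

theorem isUnitNormTightFrame_tubeFrame (hN : 0 < N) :
    (tubeFrame N k K S).IsUnitNormTightFrame ((N + k : ℕ) / N) := by
  have h := isUnitNormTightFrame_blockDFT (fun i r => by unfold tubeWeight; positivity)
    (fun i => hS.sum_tubeWeight hN i.2) (fun r => hS.sum_mul_tubeWeight hN r.2)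
    (fun i => hS.injOn_support_tubeWeight i.2)
  rwa [ofReal_div, ofReal_natCast, ofReal_natCast] at h

theorem nnz_tubeFrame_le : (tubeFrame N k K S).nnz ≤ ∑ i : Fin K, (S (i + 1) - S i) ^ 2 :=
  nnz_blockDFT_le fun i => hS.injOn_support_tubeWeight i.2

theorem card_tubeFrame_cols : Fintype.card ((i : Fin K) × Fin (S (i + 1) - S i)) = N + k := by
  rw [Fintype.card_sigma]
  simp only [Fintype.card_fin]
  rw [Fin.sum_univ_eq_sum_range (fun i => S (i + 1) - S i), sum_range_tsub hS.strictMono.monotone,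
    hS.zero, hS.last, Nat.sub_zero]

end IsTubePartition

theorem isTubePartition_blockStart {N k L c : ℕ} (hk : 0 < k) (hL : 0 < L) (hc : c ≤ k)
    (hM : N + k = (k + 1) * L + c) : IsTubePartition N k (k + 1) (blockStart k L c) where
  strictMono := strictMono_nat_of_lt_succ fun i => by
    have := blockLen_eq_or (c := c) (L := L) hk i
    have := blockStart_mono (k := k) (L := L) (c := c) i.le_succ
    simp only [blockLen] at *
    omega
  zero := blockStart_zero
  last := hM ▸ blockStart_last hk hc
  mul_le i _ := hM ▸ mul_blockStart_le i
  le_mul i hi := hM ▸ le_mul_blockStart_succ hk hL hc (Nat.lt_succ_iff.1 hi)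

theorem sum_sq_eq_of_forall_eq_or {ι : Type*} [Fintype ι] {s : ι → ℕ} {L : ℕ}
    (hs : ∀ i, s i = L ∨ s i = L + 1) :
    ∑ i, s i ^ 2 = (Fintype.card ι * (L + 1) - ∑ i, s i) * L ^ 2 +
      (Fintype.card ι - (Fintype.card ι * (L + 1) - ∑ i, s i)) * (L + 1) ^ 2 := by
  have hsq : ∀ i, s i ^ 2 + (2 * L + 1) * L = L ^ 2 + (2 * L + 1) * s i := fun i => by
    rcases hs i with h | h <;> rw [h]
    ring
  have hlo : Fintype.card ι * L ≤ ∑ i, s i := by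
    simpa using sum_le_sum fun i (_ : i ∈ univ) => show L ≤ s i by rcases hs i with h | h <;> omega
  have hhi : ∑ i, s i ≤ Fintype.card ι * (L + 1) := by
    simpa using sum_le_sum fun i (_ : i ∈ univ) => show s i ≤ L + 1 by
      rcases hs i with h | h <;> omega
  have hle : Fintype.card ι * (L + 1) - ∑ i, s i ≤ Fintype.card ι := by
    rw [mul_add_one] at hhi ⊢
    omega
  have htot := sum_congr rfl fun i (_ : i ∈ univ) => hsq i
  simp only [sum_add_distrib, ← mul_sum, sum_const, card_univ, smul_eq_mul] at htot
  zify [hhi, hle] at htot ⊢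
  linear_combination htot

theorem exists_isUnitNormTightFrame_nnz_le {N M K L : ℕ} (hN : 0 < N) (hNM : N < M)
    (hK : K = M - N + 1) (hL : L = M / K) :
    ∃ B : Matrix (Fin N) (Fin M) ℂ, B.IsUnitNormTightFrame (M / N) ∧
      B.nnz ≤ (K * (L + 1) - M) * L ^ 2 + (K - (K * (L + 1) - M)) * (L + 1) ^ 2 := by
  obtain ⟨k, rfl⟩ : ∃ k, M = N + k := ⟨M - N, by omega⟩
  rw [Nat.add_sub_cancel_left] at hK
  subst hK hL
  set L := (N + k) / (k + 1)
  set c := (N + k) % (k + 1)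
  have hk : 0 < k := by omega
  have hM : N + k = (k + 1) * L + c := (Nat.div_add_mod _ _).symm
  have hL : 0 < L := Nat.div_pos (by omega) k.succ_pos
  have hc : c ≤ k := Nat.lt_succ_iff.1 (Nat.mod_lt _ k.succ_pos)
  have hS := isTubePartition_blockStart hk hL hc hM
  obtain ⟨B, hB, hBnnz⟩ := (hS.isUnitNormTightFrame_tubeFrame hN).exists_fin_of_card_eq
    (Fintype.card_fin N) hS.card_tubeFrame_cols
  refine ⟨B, by exact_mod_cast hB, hBnnz ▸ hS.nnz_tubeFrame_le.trans_eq ?_⟩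
  have hsum := hS.card_tubeFrame_cols
  simp only [Fintype.card_sigma, Fintype.card_fin] at hsum
  simpa only [blockLen, Fintype.card_fin, hsum] using
    sum_sq_eq_of_forall_eq_or (s := fun i : Fin (k + 1) => blockLen k L c i)
      (fun i => blockLen_eq_or hk i)

theorem sparse_low_redundancy_tight_frame_gcd_general (N M : ℕ) (hN : 0 < N)
    (h1 : N < M)
    (g M' N' K' L' r' : ℕ) (hg : g = Nat.gcd M N) (hM' : M' = M / g) (hN' : N' = N / g)
    (hK' : K' = M' - N' + 1) (hL' : L' = M' / K') (hr' : r' = K' * (L' + 1) - M') :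
    ∃ A : Matrix (Fin N) (Fin M) ℂ,
      (∀ m : Fin M, ∑ n : Fin N, ‖A n m‖ ^ 2 = 1) ∧
      A * A.conjTranspose = ((M : ℂ) / (N : ℂ)) • 1 ∧
      {p : Fin N × Fin M | A p.1 p.2 ≠ 0}.ncard ≤
        g * (r' * L' ^ 2 + (K' - r') * (L' + 1) ^ 2) := by
  have hg0 : 0 < g := hg ▸ Nat.gcd_pos_of_pos_right M hN
  have hMg : M = g * M' := hM' ▸ (Nat.mul_div_cancel' (hg ▸ Nat.gcd_dvd_left M N)).symm
  have hNg : N = g * N' := hN' ▸ (Nat.mul_div_cancel' (hg ▸ Nat.gcd_dvd_right M N)).symm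
  obtain ⟨B, hB, hBnnz⟩ := exists_isUnitNormTightFrame_nnz_le (Nat.pos_of_mul_pos_left (hNg ▸ hN))
    (Nat.lt_of_mul_lt_mul_left (hMg ▸ hNg ▸ h1)) hK' hL'
  have hcardN : Fintype.card (Fin N' × Fin g) = N := by simp [hNg, mul_comm]
  have hcardM : Fintype.card (Fin M' × Fin g) = M := by simp [hMg, mul_comm]
  obtain ⟨A, hA, hAnnz⟩ := hB.blockDiagonal.exists_fin_of_card_eq hcardN hcardM
  have hMN : (M' : ℂ) / N' = M / N := by
    rw [hMg, hNg, Nat.cast_mul, Nat.cast_mul, mul_div_mul_left _ _ (by exact_mod_cast hg0.ne')]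
  refine ⟨A, hA.1, hMN ▸ hA.2, ?_⟩
  calc A.nnz = g * B.nnz := by rw [hAnnz, nnz_blockDiagonal, Fintype.card_fin]
    _ ≤ _ := hr' ▸ Nat.mul_le_mul_left g hBnnz

/-- Let `N < M < 2N`, `g = gcd(M,N)`, `M' = M/g`, `N' = N/g`, `K' = M' − N' + 1`,
`L' = ⌊M'/K'⌋`, `r' = K'(L'+1) − M'`.  Then there is an `M`-element unit norm
tight frame for `ℂ^N` whose `N × M` synthesis matrix `A` (unit-norm columns,
`A Aᴴ = (M/N) I`) has at most `g(r'L'² + (K'−r')(L'+1)²)` nonzero entries. -/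
theorem sparse_low_redundancy_tight_frame_gcd (N M : ℕ) (hN : 0 < N)
    (h1 : N < M) (h2 : M < 2 * N)
    (g M' N' K' L' r' : ℕ) (hg : g = Nat.gcd M N) (hM' : M' = M / g) (hN' : N' = N / g)
    (hK' : K' = M' - N' + 1) (hL' : L' = M' / K') (hr' : r' = K' * (L' + 1) - M') :
    ∃ A : Matrix (Fin N) (Fin M) ℂ,
      (∀ m : Fin M, ∑ n : Fin N, ‖A n m‖ ^ 2 = 1) ∧
      A * A.conjTranspose = ((M : ℂ) / (N : ℂ)) • 1 ∧
      {p : Fin N × Fin M | A p.1 p.2 ≠ 0}.ncard ≤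
        g * (r' * L' ^ 2 + (K' - r') * (L' + 1) ^ 2) :=
  sparse_low_redundancy_tight_frame_gcd_general N M hN h1 g M' N' K' L' r' hg hM' hN' hK' hL' hr'
end

section
/- Let L ≥ 2 be an integer and let λ_1, …, λ_L be positive real numbers satisfying Σ_{i=1}^{L−1} λ_i < L ≤ Σ_{i=1}^{L} λ_i. Then there exists a matrix B ∈ ℂ^{L×L} such that every column of B has norm 1, the rows of B are pairwise orthogonal, row i has squared norm λ_i for i = 1, …, L−1, and row L has squared norm c_L := L − Σ_{i=1}^{L−1} λ_i, which satisfies 0 < c_L ≤ λ_L. (Such a matrix is a general D_L block for λ_1, …, λ_L, obtained by scaling the rows of the L×L DFT matrix.) -/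
/-!
Put `c_L = L - ∑_{i<L} λ_i` and let `μ` be `λ` with its last entry replaced by `c_L`, so that
`∑ μ_i = L`; the bounds `0 < c_L ≤ λ_L` are the two hypotheses on the partial sums. The Fourier
matrix `(ζ^(jk))` of a primitive `L`-th root of unity has unimodular entries and orthogonal rows
of squared norm `L`. Scaling its row `i` by `√(μ_i / L)` therefore gives orthogonal rows of
squared norm `μ_i` and columns of squared norm `∑ μ_i / L = 1`.
-/

open Complex ComplexConjugate Finset Matrix

theorem geom_sum_eq_zero_of_pow_eq_one {K : Type*} [Field K] {w : K} {n : ℕ}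
    (hw : w ≠ 1) (hwn : w ^ n = 1) : ∑ j ∈ range n, w ^ j = 0 := by
  rw [geom_sum_eq hw, hwn, sub_self, zero_div]

def fourierMatrix (L : ℕ) (ζ : ℂ) : Matrix (Fin L) (Fin L) ℂ :=
  of fun j k => ζ ^ ((j : ℕ) * k)

section fourierMatrix

variable {L : ℕ} {ζ : ℂ}

theorem norm_fourierMatrix_apply (hζ : IsPrimitiveRoot ζ L) (j k : Fin L) :
    ‖fourierMatrix L ζ j k‖ = 1 := by
  rw [fourierMatrix, of_apply, norm_pow, hζ.norm'_eq_one (Fin.pos j).ne', one_pow]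

theorem fourierMatrix_mul_conjTranspose (hζ : IsPrimitiveRoot ζ L) :
    fourierMatrix L ζ * (fourierMatrix L ζ)ᴴ = (L : ℂ) • 1 := by
  ext i k
  have hζ0 : ζ ≠ 0 := hζ.ne_zero (Fin.pos i).ne'
  set w := ζ ^ (i : ℕ) * (ζ ^ (k : ℕ))⁻¹
  have hconj : conj ζ = ζ⁻¹ := (inv_eq_conj (hζ.norm'_eq_one (Fin.pos i).ne')).symm
  -- the `(i, k)` entry is the geometric sum of the `L`-th root of unity `w = ζ^i / ζ^k`
  have hterm (j : Fin L) : fourierMatrix L ζ i j * star (fourierMatrix L ζ k j) = w ^ (j : ℕ) := by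
    rw [fourierMatrix, of_apply, of_apply, star_def, map_pow, hconj, mul_pow, inv_pow, inv_pow,
      ← pow_mul, ← pow_mul, mul_comm (k : ℕ)]
  rw [mul_apply]
  simp only [conjTranspose_apply, hterm, Fin.sum_univ_eq_sum_range (w ^ ·), Matrix.smul_apply,
    one_apply, smul_eq_mul, mul_ite, mul_one, mul_zero]
  split_ifs with hik
  · simp [w, hik, hζ0]
  · apply geom_sum_eq_zero_of_pow_eq_one
    · rw [Ne, mul_inv_eq_one₀ (pow_ne_zero _ hζ0)]
      exact fun h => hik (Fin.ext (hζ.pow_inj i.isLt k.isLt h))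
    · rw [mul_pow, inv_pow, ← pow_mul, ← pow_mul, mul_comm _ L, mul_comm _ L, pow_mul, pow_mul,
        hζ.pow_eq_one, one_pow, one_pow, inv_one, mul_one]

end fourierMatrix

section rowScaling

variable {m n : Type*} [Fintype m] [DecidableEq m]

theorem diagonal_sqrt_mul_mul_conjTranspose [Fintype n] {F : Matrix m n ℂ} {c : ℝ} (hc : 0 < c)
    (hF : F * Fᴴ = (c : ℂ) • 1) {μ : m → ℝ} (hμ : ∀ i, 0 ≤ μ i) :
    diagonal (fun i => (√(μ i / c) : ℂ)) * F * (diagonal (fun i => (√(μ i / c) : ℂ)) * F)ᴴ =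
      diagonal (fun i => (μ i : ℂ)) := by
  rw [conjTranspose_mul, diagonal_conjTranspose, Matrix.mul_assoc, ← Matrix.mul_assoc F, hF,
    smul_one_mul, mul_smul_comm, diagonal_mul_diagonal, ← diagonal_smul]
  congr 1
  funext i
  simp only [Pi.smul_apply, Pi.star_apply, star_def, conj_ofReal, smul_eq_mul]
  rw [← ofReal_mul, Real.mul_self_sqrt (div_nonneg (hμ i) hc.le), ← ofReal_mul,
    mul_div_cancel₀ _ hc.ne']

theorem sum_norm_diagonal_sqrt_mul_apply_sq {F : Matrix m n ℂ} (hF : ∀ i j, ‖F i j‖ = 1)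
    {c : ℝ} {μ : m → ℝ} (hμ : ∀ i, 0 ≤ μ i) (hc : 0 ≤ c) (j : n) :
    ∑ i, ‖(diagonal (fun i => (√(μ i / c) : ℂ)) * F) i j‖ ^ 2 = (∑ i, μ i) / c := by
  simp only [diagonal_mul, norm_mul, hF, mul_one, norm_real, Real.norm_eq_abs, sq_abs,
    Real.sq_sqrt (div_nonneg (hμ _) hc), sum_div]

end rowScaling

section lastIndex

variable {L : ℕ}

theorem Fin.filter_not_lt_pred_eq_singleton (hL : 0 < L) :
    univ.filter (fun i : Fin L => ¬(i : ℕ) < L - 1) = {⟨L - 1, by omega⟩} := by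
  ext i
  simp only [mem_filter, mem_univ, true_and, mem_singleton, not_lt, Fin.ext_iff]
  omega

theorem Fin.sum_eq_sum_filter_lt_pred_add {M : Type*} [AddCommMonoid M] (hL : 0 < L)
    (f : Fin L → M) :
    ∑ i, f i = ∑ i ∈ univ.filter (fun i : Fin L => (i : ℕ) < L - 1), f i + f ⟨L - 1, by omega⟩ := by
  rw [← sum_filter_add_sum_filter_not univ (fun i : Fin L => (i : ℕ) < L - 1),
    Fin.filter_not_lt_pred_eq_singleton hL, sum_singleton]

end lastIndex

/-- Existence of a general `D_L` block.  Let `L ≥ 2` and let `λ_1, …, λ_L` be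
positive reals with `Σ_{i<L} λ_i < L ≤ Σ_{i≤L} λ_i` (sums over the first `L−1`,
resp. all `L`, values).  Then there is an `L × L` complex matrix `B` with
normalized columns whose rows are pairwise orthogonal, such that row `i` has
squared norm `λ_i` for `i = 1, …, L−1` and the last row has squared norm
`c_L := L − Σ_{i=1}^{L−1} λ_i`, which satisfies `0 < c_L ≤ λ_L`. -/
theorem general_DL_block_exists (L : ℕ) (hL : 2 ≤ L) (lam : Fin L → ℝ)
    (hpos : ∀ i, 0 < lam i)
    (hlt : ∑ i ∈ Finset.univ.filter (fun i : Fin L => (i : ℕ) < L - 1), lam i < L)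
    (hle : (L : ℝ) ≤ ∑ i, lam i) :
    ∃ B : Matrix (Fin L) (Fin L) ℂ,
      (∀ j : Fin L, ∑ i : Fin L, ‖B i j‖ ^ 2 = 1) ∧
      B * B.conjTranspose = Matrix.diagonal (fun i : Fin L =>
        if (i : ℕ) < L - 1 then (lam i : ℂ)
        else (((L : ℝ) - ∑ i ∈ Finset.univ.filter (fun i : Fin L => (i : ℕ) < L - 1), lam i : ℝ) : ℂ)) ∧
      0 < (L : ℝ) - ∑ i ∈ Finset.univ.filter (fun i : Fin L => (i : ℕ) < L - 1), lam i ∧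
      (L : ℝ) - (∑ i ∈ Finset.univ.filter (fun i : Fin L => (i : ℕ) < L - 1), lam i) ≤
        lam ⟨L - 1, by omega⟩ := by
  have hL0 : 0 < L := by omega
  set S := ∑ i ∈ univ.filter (fun i : Fin L => (i : ℕ) < L - 1), lam i
  have hcL : 0 < (L : ℝ) - S := sub_pos.2 hlt
  have hcL_le : (L : ℝ) - S ≤ lam ⟨L - 1, by omega⟩ := by
    linarith [Fin.sum_eq_sum_filter_lt_pred_add hL0 lam]
  set μ : Fin L → ℝ := fun i => if (i : ℕ) < L - 1 then lam i else L - S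
  have hμ_nonneg (i : Fin L) : 0 ≤ μ i := by
    simp only [μ]; split_ifs <;> linarith [hpos i]
  have hμ_sum : ∑ i, μ i = L := by
    have hμ_last : μ ⟨L - 1, by omega⟩ = L - S := if_neg (lt_irrefl _)
    rw [Fin.sum_eq_sum_filter_lt_pred_add hL0, hμ_last,
      sum_congr rfl fun i hi => if_pos (mem_filter.1 hi).2]
    ring
  have hζ := Complex.isPrimitiveRoot_exp L hL0.ne'
  refine ⟨diagonal (fun i => (√(μ i / L) : ℂ)) * fourierMatrix L (exp (2 * Real.pi * I / L)),
    fun j => ?_, ?_, hcL, hcL_le⟩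
  · rw [sum_norm_diagonal_sqrt_mul_apply_sq (norm_fourierMatrix_apply hζ) hμ_nonneg
      (Nat.cast_nonneg L), hμ_sum, div_self (Nat.cast_ne_zero.2 hL0.ne')]
  · rw [diagonal_sqrt_mul_mul_conjTranspose (Nat.cast_pos.2 hL0)
      (by rw [ofReal_natCast]; exact fourierMatrix_mul_conjTranspose hζ) hμ_nonneg]
    exact congrArg diagonal (funext fun i => apply_ite ofReal _ _ _)
end

section
/- Let M ≥ N be positive integers, let λ_1, …, λ_N be positive integers with Σ_{n=1}^N λ_n = M, and let d_1, …, d_D be positive integers with Σ_{i=1}^D d_i = M. Set T = max_n λ_n and for n = 1, …, T let a_n = |{r ∈ {1,…,N} : λ_r ≥ n}|. Then the following are equivalent: (i) there exist subsets S_1, …, S_D of {1,…,N} with |S_i| = d_i for every i such that each n ∈ {1,…,N} belongs to exactly λ_n of the sets S_1, …, S_D; (ii) (a_n)_{n=1}^T majorizes (d_i)_{i=1}^D. (Condition (i) says exactly that a spectral tetris fusion frame with eigenvalues (λ_n) and subspace dimensions (d_i) exists: taking W_i to be the span of the standard basis vectors indexed by S_i gives subspaces with dim W_i = d_i whose orthogonal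 projections sum to diag(λ_1, …, λ_N).) -/
/-- A multiset `s` of natural numbers majorizes a multiset `t` if they have the
same sum and, for every `m`, the sum of the `m` largest elements of `s` is at
least the sum of the `m` largest elements of `t` (shorter multisets are
implicitly padded with zeros). -/
def Multiset.Majorizes (s t : Multiset ℕ) : Prop :=
  s.sum = t.sum ∧
    ∀ m : ℕ, ((t.sort (· ≥ ·)).take m).sum ≤ ((s.sort (· ≥ ·)).take m).sum

/-!
Condition (i) asks for a 0-1 matrix with row sums `d` and column sums `λ`, and `(a_n)` is the
conjugate partition of `λ`, so this is the Gale–Ryser theorem. Necessity is double counting: `m`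
rows meet column `r` in at most `min m λ_r` places, and `∑_r min m λ_r` is the sum of the `m`
largest `a_n`. For sufficiency, start from the staircase family `S_i = {r | i < λ_r}`, whose
sizes are the `a_n`. Sorting `d` decreasingly, a vector majorized by `(a_n)` is reached from it
by finitely many unit transfers from a larger entry to a smaller one (Muirhead's lemma), and each
transfer is realized by moving one element from a larger set to a smaller one, which keeps every
column count.
-/

open Finset Function

theorem List.sum_take_eq_sum_range_getD (l : List ℕ) (m : ℕ) :
    (l.take m).sum = ∑ i ∈ Finset.range m, l.getD i 0 := by
  induction l generalizing m with
  | nil => simp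
  | cons x l ih => cases m <;> simp [Finset.sum_range_succ', ih, add_comm]

theorem List.Pairwise.antitone_getD {l : List ℕ} (hl : l.Pairwise (· ≥ ·)) :
    Antitone (l.getD · 0) := by
  intro i j hij
  simp only [List.getD_eq_getElem?_getD]
  rcases lt_or_ge j l.length with hj | hj
  · rw [List.getElem?_eq_getElem hj, List.getElem?_eq_getElem (by omega)]
    rcases hij.lt_or_eq with h | rfl
    · exact List.pairwise_iff_getElem.mp hl i j (by omega) hj h
    · exact le_rfl
  · simp [List.getElem?_eq_none hj]

theorem Multiset.majorizes_coe_iff {l l' : List ℕ} (hl : l.Pairwise (· ≥ ·))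
    (hl' : l'.Pairwise (· ≥ ·)) :
    Multiset.Majorizes l l' ↔ l.sum = l'.sum ∧ ∀ m, (l'.take m).sum ≤ (l.take m).sum := by
  simp only [Multiset.Majorizes, Multiset.coe_sort, List.mergeSort_eq_self _ hl,
    List.mergeSort_eq_self _ hl', Multiset.sum_coe]

def UnitTransfer (n : ℕ) (f g : ℕ → ℕ) : Prop :=
  ∃ j < n, ∃ k < n, f k < f j ∧ g = update (update f j (f j - 1)) k (f k + 1)

theorem sum_range_update_update_add {f : ℕ → ℕ} {j k : ℕ} (hjk : j ≠ k) (hj : 0 < f j) (m : ℕ) :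
    ∑ i ∈ range m, update (update f j (f j - 1)) k (f k + 1) i + (if j < m then 1 else 0) =
      ∑ i ∈ range m, f i + (if k < m then 1 else 0) := by
  have key : ∀ i, update (update f j (f j - 1)) k (f k + 1) i + (if j = i then 1 else 0) =
      f i + (if k = i then 1 else 0) := by
    intro i
    rcases eq_or_ne i k with rfl | hik
    · simp [hjk]
    rcases eq_or_ne i j with rfl | hij
    · simp only [ne_eq, hik, not_false_eq_true, update_of_ne, update_self, ↓reduceIte,
        hik.symm, add_zero]
      omega
    · simp [hik, hij, hik.symm, hij.symm]
  simpa [sum_add_distrib, sum_ite_eq] using sum_congr (s₁ := range m) rfl (fun i _ => key i)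

theorem exists_lt_of_sum_range_le {s t : ℕ → ℕ}
    (hle : ∀ m, ∑ i ∈ range m, t i ≤ ∑ i ∈ range m, s i) {k : ℕ} (hk : s k < t k) :
    ∃ j < k, t j < s j ∧ ∀ m, j < m → m ≤ k → ∑ i ∈ range m, t i < ∑ i ∈ range m, s i := by
  have hk' : ∑ i ∈ range k, t i < ∑ i ∈ range k, s i := by
    have := hle (k + 1)
    rw [sum_range_succ, sum_range_succ] at this
    omega
  let P m := ∑ i ∈ range m, s i ≤ ∑ i ∈ range m, t i
  -- the last index up to `k` at which the prefix sums of `s` and `t` agree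
  set j := Nat.findGreatest P k
  have hj : P j := Nat.findGreatest_spec (Nat.zero_le k) (by simp [P])
  have hgt : ∀ m, j < m → m ≤ k → ∑ i ∈ range m, t i < ∑ i ∈ range m, s i :=
    fun m hjm hmk => lt_of_not_ge (Nat.findGreatest_is_greatest (P := P) hjm hmk)
  have hjk : j < k := (Nat.findGreatest_le k).lt_of_ne fun h => (h ▸ hj : P k).not_gt hk'
  refine ⟨j, hjk, ?_, hgt⟩
  have := hgt (j + 1) (by omega) (by omega)
  rw [sum_range_succ, sum_range_succ] at this
  omega

theorem reflTransGen_unitTransfer_of_sum_range_le {n : ℕ} {s t : ℕ → ℕ} (ht : Antitone t)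
    (hs : ∀ i, n ≤ i → s i = 0) (ht₀ : ∀ i, n ≤ i → t i = 0)
    (hle : ∀ m, ∑ i ∈ range m, t i ≤ ∑ i ∈ range m, s i)
    (heq : ∑ i ∈ range n, s i = ∑ i ∈ range n, t i) :
    Relation.ReflTransGen (UnitTransfer n) s t := by
  induction hδ : ∑ i ∈ range n, (t i - s i) using Nat.strong_induction_on generalizing s with
  | _ δ ih =>
  by_cases hts : ∀ k < n, t k ≤ s k
  · obtain rfl : s = t := by
      funext i
      rcases lt_or_ge i n with hi | hi
      · exact ((sum_eq_sum_iff_of_le fun k hk => hts k (mem_range.1 hk)).1 heq.symm i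
          (mem_range.2 hi)).symm
      · rw [hs i hi, ht₀ i hi]
    exact .refl
  push Not at hts
  obtain ⟨k, hkn, hk⟩ := hts
  obtain ⟨j, hjk, hj, hgt⟩ := exists_lt_of_sum_range_le hle hk
  have hsum := sum_range_update_update_add (f := s) hjk.ne (by omega)
  have hdef : ∀ i, t i - update (update s j (s j - 1)) k (s k + 1) i + (if k = i then 1 else 0) =
      t i - s i := by
    intro i
    rcases eq_or_ne i k with rfl | hik
    · simp only [update_self, ↓reduceIte]
      omega
    rcases eq_or_ne i j with rfl | hij
    · simp only [ne_eq, hik, not_false_eq_true, update_of_ne, update_self, hik.symm,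
        ↓reduceIte, add_zero]
      omega
    · simp [hik, hij, hik.symm]
  have hδ' : ∑ i ∈ range n, (t i - update (update s j (s j - 1)) k (s k + 1) i) + 1 = δ := by
    simpa [sum_add_distrib, sum_ite_eq, hkn, hδ] using
      sum_congr rfl fun i (_ : i ∈ range n) => hdef i
  refine .head ⟨j, hjk.trans hkn, k, hkn, by have := ht hjk.le; omega, rfl⟩
    (ih _ (by omega) ?_ ?_ ?_ rfl)
  · intro i hi
    simp [show i ≠ k by omega, show i ≠ j by omega, hs i hi]
  · intro m
    have hm := hsum m
    by_cases hjm : j < m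
    · by_cases hkm : k < m
      · rw [if_pos hjm, if_pos hkm] at hm
        have := hle m
        omega
      · rw [if_pos hjm, if_neg hkm] at hm
        have := hgt m hjm (by omega)
        omega
    · rw [if_neg hjm, if_neg (by omega)] at hm
      have := hle m
      omega
  · have hn := hsum n
    rw [if_pos (hjk.trans hkn), if_pos hkn] at hn
    omega

theorem exists_move_mem_of_card_lt {ι α : Type*} [DecidableEq ι] [DecidableEq α]
    (S : ι → Finset α) {j k : ι} (h : #(S k) < #(S j)) :
    ∃ S' : ι → Finset α, #(S' j) = #(S j) - 1 ∧ #(S' k) = #(S k) + 1 ∧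
      (∀ i, i ≠ j → i ≠ k → S' i = S i) ∧
      ∀ J : Finset ι, j ∈ J → k ∈ J → ∀ r, #{i ∈ J | r ∈ S' i} = #{i ∈ J | r ∈ S i} := by
  obtain ⟨v, hvj, hvk⟩ := exists_mem_notMem_of_card_lt_card h
  have hjk : j ≠ k := by rintro rfl; exact hvk hvj
  refine ⟨update (update S j ((S j).erase v)) k (insert v (S k)),
    by simp [hjk, card_erase_of_mem hvj], by simp [card_insert_of_notMem hvk],
    fun i hij hik => by simp [hij, hik], fun J hj hk r => ?_⟩
  by_cases hr : r = v
  · -- `v` moved from `S j` to `S k`, so swapping `j` and `k` matches the two filters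
    subst hr
    refine card_equiv (Equiv.swap j k) fun i => ?_
    rcases eq_or_ne i k with rfl | hik
    · simp [hj, hk, hvj]
    rcases eq_or_ne i j with rfl | hij
    · simp [hk, hvk, hjk]
    · simp [Equiv.swap_apply_of_ne_of_ne hij hik, hij, hik]
  · congr 1
    refine filter_congr fun i _ => ?_
    rcases eq_or_ne i k with rfl | hik
    · simp [hr]
    rcases eq_or_ne i j with rfl | hij
    · simp [hik, hr]
    · simp [hij, hik]

theorem sum_card_eq_sum_card_filter_mem {ι α : Type*} [Fintype α] [DecidableEq α]
    (S : ι → Finset α) (I : Finset ι) :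
    ∑ i ∈ I, #(S i) = ∑ r, #{i ∈ I | r ∈ S i} := by
  simpa [bipartiteAbove, bipartiteBelow, filter_mem_eq_inter]
    using sum_card_bipartiteAbove_eq_sum_card_bipartiteBelow (fun i r => r ∈ S i) (s := I)
      (t := univ)

theorem card_filter_range_lt (m c : ℕ) : #{i ∈ range m | i < c} = min m c := by
  rw [show {i ∈ range m | i < c} = range (min m c) by ext; simp, card_range]

theorem sum_range_card_filter_lt {α : Type*} [Fintype α] (lam : α → ℕ) (m : ℕ) :
    ∑ i ∈ range m, #{r | i < lam r} = ∑ r, min m (lam r) := by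
  simp only [card_filter]
  rw [sum_comm]
  simp [card_filter_range_lt]

theorem pairwise_map_range_card_filter_lt {α : Type*} [Fintype α] (lam : α → ℕ) (T : ℕ) :
    ((List.range T).map fun n => #{r | n < lam r}).Pairwise (· ≥ ·) :=
  List.pairwise_map.2 <| List.pairwise_lt_range.imp fun hnm =>
    card_le_card (monotone_filter_right _ fun _ _ h => hnm.trans h)

theorem sum_take_map_range_card_filter_lt {α : Type*} [Fintype α] {lam : α → ℕ} {T : ℕ}
    (hlam : ∀ r, lam r ≤ T) (m : ℕ) :
    (((List.range T).map fun n => #{r | n < lam r}).take m).sum = ∑ r, min m (lam r) := by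
  rw [List.sum_take_eq_sum_range_getD, ← sum_range_card_filter_lt]
  refine sum_congr rfl fun i _ => ?_
  rcases lt_or_ge i T with hi | hi
  · simp [hi]
  · rw [List.getD_eq_default _ _ (by simpa using hi), eq_comm, card_eq_zero,
      filter_eq_empty_iff]
    exact fun r _ => not_lt.2 ((hlam r).trans hi)

theorem card_filter_fin_eq_card_filter_range (D : ℕ) (p : ℕ → Prop) [DecidablePred p] :
    #{i : Fin D | p i} = #{i ∈ range D | p i} := by
  simp only [card_filter]
  exact Fin.sum_univ_eq_sum_range (fun i => if p i then 1 else 0) D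

section Realizable

variable {α : Type*} [DecidableEq α]

-- `f` and `lam` are the row and column sums of a 0-1 matrix with `D` rows; rows are indexed by `ℕ`
-- so that prefix sums of `f` are sums over `range m`.
def Realizable (D : ℕ) (lam : α → ℕ) (f : ℕ → ℕ) : Prop :=
  ∃ S : ℕ → Finset α, (∀ i < D, #(S i) = f i) ∧ ∀ r, #{i ∈ range D | r ∈ S i} = lam r

theorem Realizable.unitTransfer {D : ℕ} {lam : α → ℕ} {f g : ℕ → ℕ} (hf : Realizable D lam f)
    (hfg : UnitTransfer D f g) : Realizable D lam g := by
  obtain ⟨S, hcard, hcount⟩ := hf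
  obtain ⟨j, hj, k, hk, hlt, rfl⟩ := hfg
  obtain ⟨S', hj', hk', hS', hcount'⟩ :=
    exists_move_mem_of_card_lt S (j := j) (k := k) (by rw [hcard j hj, hcard k hk]; exact hlt)
  refine ⟨S', fun i hi => ?_, fun r =>
    (hcount' _ (mem_range.2 hj) (mem_range.2 hk) r).trans (hcount r)⟩
  rcases eq_or_ne i k with rfl | hik
  · simp [hk', hcard i hi]
  rcases eq_or_ne i j with rfl | hij
  · simp [hik, hj', hcard i hi]
  · simp [hik, hij, hS' i hij hik, hcard i hi]

theorem Realizable.of_reflTransGen {D : ℕ} {lam : α → ℕ} {f g : ℕ → ℕ} (hf : Realizable D lam f)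
    (hfg : Relation.ReflTransGen (UnitTransfer D) f g) : Realizable D lam g := by
  induction hfg with
  | refl => exact hf
  | tail _ hstep ih => exact ih.unitTransfer hstep

theorem realizable_conjugate [Fintype α] {D : ℕ} {lam : α → ℕ} (hlam : ∀ r, lam r ≤ D) :
    Realizable D lam (fun i => #{r | i < lam r}) :=
  ⟨fun i => {r | i < lam r}, fun _ _ => rfl, fun r => by
    simpa [card_filter_range_lt] using hlam r⟩

theorem Realizable.sum_range_eq [Fintype α] {D : ℕ} {lam : α → ℕ} {f : ℕ → ℕ}
    (hf : Realizable D lam f) :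
    ∑ i ∈ range D, f i = ∑ r, lam r := by
  obtain ⟨S, hcard, hcount⟩ := hf
  rw [← sum_congr rfl fun i hi => hcard i (mem_range.1 hi), sum_card_eq_sum_card_filter_mem]
  exact sum_congr rfl fun r _ => hcount r

theorem Realizable.sum_range_min_le [Fintype α] {D : ℕ} {lam : α → ℕ} {f : ℕ → ℕ}
    (hf : Realizable D lam f) (m : ℕ) :
    ∑ i ∈ range (min m D), f i ≤ ∑ r, min m (lam r) := by
  obtain ⟨S, hcard, hcount⟩ := hf
  rw [← sum_congr rfl fun i hi => hcard i (by simp only [mem_range, lt_inf_iff] at hi; omega),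
    sum_card_eq_sum_card_filter_mem]
  refine sum_le_sum fun r _ => le_min ?_ ?_
  · exact (card_filter_le _ _).trans (by simp)
  · rw [← hcount r]
    exact card_le_card (filter_subset_filter _ (range_subset_range.2 (min_le_right m D)))

theorem realizable_iff [Fintype α] {D : ℕ} {lam : α → ℕ} {t : ℕ → ℕ} (ht : Antitone t)
    (ht₀ : ∀ i, D ≤ i → t i = 0) :
    Realizable D lam t ↔
      ∑ i ∈ range D, t i = ∑ r, lam r ∧ ∀ m, ∑ i ∈ range m, t i ≤ ∑ r, min m (lam r) := by
  refine ⟨fun h => ⟨h.sum_range_eq, fun m => ?_⟩, fun ⟨hsum, hle⟩ => ?_⟩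
  · have htrunc : ∑ i ∈ range m, t i = ∑ i ∈ range (min m D), t i :=
      (sum_subset (range_subset_range.2 (min_le_left m D)) fun i hi hi' => by
        simp only [mem_range] at hi hi'
        exact ht₀ i (by omega)).symm
    exact htrunc ▸ h.sum_range_min_le m
  have hlamD : ∀ r, lam r ≤ D := by
    have h := (sum_eq_sum_iff_of_le fun r (_ : r ∈ univ) => min_le_right D (lam r)).1
      ((sum_le_sum fun r _ => min_le_right D (lam r)).antisymm (hsum ▸ hle D))
    exact fun r => min_eq_right_iff.1 (h r (mem_univ r))
  have hpath : Relation.ReflTransGen (UnitTransfer D) (fun i => #{r | i < lam r}) t := by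
    refine reflTransGen_unitTransfer_of_sum_range_le ht (fun i hi => ?_) ht₀
      (fun m => sum_range_card_filter_lt lam m ▸ hle m) ?_
    · exact card_eq_zero.2 (filter_eq_empty_iff.2 fun r _ => not_lt.2 ((hlamD r).trans hi))
    · rw [sum_range_card_filter_lt, hsum]
      exact sum_congr rfl fun r _ => min_eq_right (hlamD r)
  exact (realizable_conjugate hlamD).of_reflTransGen hpath

theorem exists_family_comp_perm_iff {D : ℕ} (lam : α → ℕ) (g : Fin D → ℕ)
    (σ : Equiv.Perm (Fin D)) :
    (∃ S : Fin D → Finset α, (∀ i, #(S i) = (g ∘ σ) i) ∧ ∀ r, #{i | r ∈ S i} = lam r) ↔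
      ∃ S : Fin D → Finset α, (∀ i, #(S i) = g i) ∧ ∀ r, #{i | r ∈ S i} = lam r := by
  have reindex : ∀ (g : Fin D → ℕ) (σ : Equiv.Perm (Fin D)),
      (∃ S : Fin D → Finset α, (∀ i, #(S i) = g i) ∧ ∀ r, #{i | r ∈ S i} = lam r) →
        ∃ S : Fin D → Finset α, (∀ i, #(S i) = (g ∘ σ) i) ∧ ∀ r, #{i | r ∈ S i} = lam r :=
    fun g σ ⟨S, hcard, hcount⟩ => ⟨S ∘ σ, fun i => hcard (σ i),
      fun r => (card_equiv σ fun i => by simp).trans (hcount r)⟩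
  exact ⟨fun h => by simpa using reindex _ σ.symm h, reindex g σ⟩

theorem exists_family_iff_realizable {D : ℕ} (lam : α → ℕ) (g : Fin D → ℕ) :
    (∃ S : Fin D → Finset α, (∀ i, #(S i) = g i) ∧ ∀ r, #{i | r ∈ S i} = lam r) ↔
      Realizable D lam (fun i => (List.ofFn g).getD i 0) := by
  constructor
  · rintro ⟨S, hcard, hcount⟩
    refine ⟨fun i => if h : i < D then S ⟨i, h⟩ else ∅, fun i hi => by simp [hi, hcard],
      fun r => ?_⟩
    rw [← card_filter_fin_eq_card_filter_range, ← hcount r]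
    simp
  · rintro ⟨S, hcard, hcount⟩
    refine ⟨fun i => S i, fun i => by simp [hcard i i.2], fun r => ?_⟩
    rw [← hcount r, card_filter_fin_eq_card_filter_range D (fun i => r ∈ S i)]

end Realizable

theorem spectral_tetris_fusion_frame_integer_iff_general (N D : ℕ)
    (lam : Fin N → ℕ)
    (d : Fin D → ℕ)
    (T : ℕ) (hT : T = Finset.univ.sup lam)
    (a : ℕ → ℕ) (ha : ∀ n, a n = (Finset.univ.filter (fun r : Fin N => n ≤ lam r)).card) :
    (∃ S : Fin D → Finset (Fin N),
        (∀ i, (S i).card = d i) ∧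
        ∀ n : Fin N, (Finset.univ.filter (fun i => n ∈ S i)).card = lam n) ↔
      Multiset.Majorizes ((Multiset.range T).map (fun n => a (n + 1)))
        (Multiset.map d Finset.univ.val) := by
  have hlamT : ∀ r, lam r ≤ T := hT ▸ fun r => le_sup (mem_univ r)
  obtain ⟨σ, hσ⟩ : ∃ σ : Equiv.Perm (Fin D), Antitone (d ∘ σ) :=
    ⟨Tuple.sort (OrderDual.toDual ∘ d), monotone_toDual_comp_iff.1 (Tuple.monotone_sort _)⟩
  have hl : (List.ofFn (d ∘ σ)).Pairwise (· ≥ ·) := List.pairwise_ofFn.2 fun _ _ h => hσ h.le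
  have hd : Multiset.map d univ.val = ↑(List.ofFn (d ∘ σ)) := by
    rw [Fin.univ_val_map]
    exact Multiset.coe_eq_coe.2 (σ.ofFn_comp_perm d).symm
  -- `n < lam r` unfolds to `n + 1 ≤ lam r`
  have ha' : (fun n => a (n + 1)) = fun n => #{r | n < lam r} := funext fun n => ha (n + 1)
  have hsum_a : ((List.range T).map fun n => #{r | n < lam r}).sum = ∑ r, lam r := by
    have h := sum_take_map_range_card_filter_lt hlamT T
    rwa [List.take_of_length_le (by simp), sum_congr rfl fun r _ => min_eq_right (hlamT r)] at h
  have hsum_d : (List.ofFn (d ∘ σ)).sum = ∑ i ∈ range D, (List.ofFn (d ∘ σ)).getD i 0 := by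
    rw [← List.sum_take_eq_sum_range_getD, List.take_of_length_le (by simp)]
  rw [ha', hd, Multiset.range, Multiset.map_coe,
    Multiset.majorizes_coe_iff (pairwise_map_range_card_filter_lt lam T) hl,
    ← exists_family_comp_perm_iff lam d σ, exists_family_iff_realizable lam (d ∘ σ),
    realizable_iff hl.antitone_getD fun i hi => List.getD_eq_default _ _ (by simpa using hi),
    hsum_a, hsum_d, eq_comm]
  simp only [sum_take_map_range_card_filter_lt hlamT, List.sum_take_eq_sum_range_getD]

/-- Let `λ_1, …, λ_N` be positive integers summing to `M ≥ N` and
`d_1, …, d_D` positive integers summing to `M`.  With `T = max_n λ_n` and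
`a_n = #{r : λ_r ≥ n}`, a spectral tetris fusion frame with eigenvalues
`(λ_n)` and dimensions `(d_i)` exists — i.e. there are sets `S_i ⊆ {1,…,N}` with
`|S_i| = d_i` such that each `n` lies in exactly `λ_n` of them — if and only if
`(a_n)_{n=1}^T` majorizes `(d_i)_{i=1}^D`. -/
theorem spectral_tetris_fusion_frame_integer_iff (N M D : ℕ) (hN : 0 < N)
    (hNM : N ≤ M)
    (lam : Fin N → ℕ) (hlpos : ∀ n, 0 < lam n) (hlsum : ∑ n, lam n = M)
    (d : Fin D → ℕ) (hdpos : ∀ i, 0 < d i) (hdsum : ∑ i, d i = M)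
    (T : ℕ) (hT : T = Finset.univ.sup lam)
    (a : ℕ → ℕ) (ha : ∀ n, a n = (Finset.univ.filter (fun r : Fin N => n ≤ lam r)).card) :
    (∃ S : Fin D → Finset (Fin N),
        (∀ i, (S i).card = d i) ∧
        ∀ n : Fin N, (Finset.univ.filter (fun i => n ∈ S i)).card = lam n) ↔
      Multiset.Majorizes ((Multiset.range T).map (fun n => a (n + 1)))
        (Multiset.map d Finset.univ.val) :=
  spectral_tetris_fusion_frame_integer_iff_general N D lam d T hT a ha
end

section
/- Let M ≥ N be positive integers, let λ_1, …, λ_N be positive integers with Σ_{n=1}^N λ_n = M, and let d_1, …, d_D be positive integers with Σ_{i=1}^D d_i = M. Set T = max_n λ_n and for n = 1, …, T let a_n = |{r ∈ {1,…,N} : λ_r ≥ n}|. If (a_n)_{n=1}^T majorizes (d_i)_{i=1}^D, then there exist subspaces W_1, …, W_D of the Euclidean space ℝ^N, each spanned by a subset of the standard orthonormal basis, with dim W_i = d_i for all i, such that the sum of the orthogonal projections onto W_1, …, W_D equals the linear map given by the diagonal matrix diag(λ_1, …, λ_N). In particular (W_i)_{i=1}^D is a fusion frame for ℝ^N with eigenvalues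 λ_1, …, λ_N and prescribed dimensions d_1, …, d_D. -/
/-!
Spectral tetris reduces to a Gale–Ryser type statement: find sets `S_i ⊆ Fin N` with
`#S_i = d_i` such that every `n` lies in exactly `λ_n` of them; the coordinate subspaces
spanned by the `S_i` then have orthogonal projections summing to `diag λ`.

Since `∑_{t<m} a_{t+1} = ∑_n min(λ_n, m)`, majorization says that the `m` largest `d_i` sum to
at most `∑_n min(λ_n, m)`. Greedily let the largest `d_i` occupy the `d_i` coordinates with the
largest `λ_n` and lower those `λ_n` by one. The inequality survives for the remaining `d_j`:
if some unchosen coordinate has `λ_n > m`, every chosen one does too and the level-`m` bound is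
unchanged; otherwise the new level-`m` bound is the old level-`m + 1` bound minus `d_i`.
-/

open Finset

theorem List.sum_take_le_sum_take_cons {l : List ℕ} {a : ℕ} (hl : ∀ b ∈ l, b ≤ a) (m : ℕ) :
    (l.take m).sum ≤ ((a :: l).take m).sum := by
  cases m with
  | zero => simp
  | succ m =>
    rw [List.take_succ_cons, List.sum_cons, List.take_add_one, List.sum_append, add_comm]
    gcongr
    cases h : l[m]? with
    | none => simp
    | some b => simpa using hl b (List.mem_of_getElem? h)

theorem Multiset.sort_ge_coe_of_pairwise {α : Type*} [LinearOrder α] {l : List α}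
    (hl : l.Pairwise (· ≥ ·)) : (l : Multiset α).sort (· ≥ ·) = l := by
  rw [Multiset.coe_sort, List.mergeSort_eq_self _ hl]

theorem sum_take_sort_map_range_le {g : ℕ → ℕ} (hg : Antitone g) (T m : ℕ) :
    ((((Multiset.range T).map g).sort (· ≥ ·)).take m).sum ≤ ∑ t ∈ range m, g t := by
  have hsorted : ((List.range T).map g).Pairwise (· ≥ ·) :=
    List.pairwise_map.2 (List.pairwise_lt_range.imp fun h => hg h.le)
  rw [Multiset.range, Multiset.map_coe, Multiset.sort_ge_coe_of_pairwise hsorted, ← List.map_take,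
    List.take_range]
  exact sum_le_sum_of_subset (range_mono (min_le_left m T))

section TopSet

variable {ι α : Type*} [Fintype ι] [DecidableEq ι]

theorem exists_finset_card_eq_forall_notMem_le [LinearOrder α] (f : ι → α) {k : ℕ}
    (hk : k ≤ Fintype.card ι) : ∃ C : Finset ι, #C = k ∧ ∀ a ∈ C, ∀ b ∉ C, f b ≤ f a := by
  induction k with
  | zero => exact ⟨∅, rfl, by simp⟩
  | succ k ih =>
    obtain ⟨C, hC, htop⟩ := ih (by omega)
    obtain ⟨b, hb, hmax⟩ := Cᶜ.exists_max_image f (by rw [← card_pos, card_compl]; omega)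
    rw [mem_compl] at hb
    refine ⟨insert b C, by rw [card_insert_of_notMem hb, hC], fun a ha c hc => ?_⟩
    rw [mem_insert, not_or] at hc
    rcases mem_insert.1 ha with rfl | ha
    · exact hmax c (mem_compl.2 hc.2)
    · exact htop a ha c hc.2

theorem pos_of_mem_of_card_le {f : ι → ℕ} {C : Finset ι} (htop : ∀ a ∈ C, ∀ b ∉ C, f b ≤ f a)
    (hC : #C ≤ #{n | 0 < f n}) {a : ι} (ha : a ∈ C) : 0 < f a := by
  by_contra! h0
  have hsub : ({n | 0 < f n} : Finset ι) ⊆ C.erase a := fun n hn => by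
    rw [mem_filter] at hn
    refine mem_erase.2 ⟨by rintro rfl; omega, ?_⟩
    by_contra hnC
    have := htop a ha n hnC
    omega
  have := card_le_card hsub
  rw [card_erase_of_mem ha] at this
  have := card_pos.2 ⟨a, ha⟩
  omega

end TopSet

section Conjugate

variable {ι : Type*} [Fintype ι]

theorem sum_min_add_one (lam : ι → ℕ) (m : ℕ) :
    ∑ n, min (lam n) (m + 1) = ∑ n, min (lam n) m + #{n | m + 1 ≤ lam n} := by
  rw [card_filter, ← sum_add_distrib]
  exact sum_congr rfl fun n _ => by split_ifs <;> omega

theorem sum_range_card_filter_le_eq_sum_min (lam : ι → ℕ) (m : ℕ) :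
    ∑ t ∈ range m, #{n | t + 1 ≤ lam n} = ∑ n, min (lam n) m := by
  induction m with
  | zero => simp
  | succ m ih => rw [sum_range_succ, ih, sum_min_add_one]

theorem sum_take_le_sum_min_of_cons [DecidableEq ι] {lam : ι → ℕ} {C : Finset ι} {l : List ℕ}
    (htop : ∀ a ∈ C, ∀ b ∉ C, lam b ≤ lam a) (hpos : ∀ a ∈ C, 0 < lam a)
    (hl : ∀ b ∈ l, b ≤ #C) (hmaj : ∀ m, ((#C :: l).take m).sum ≤ ∑ n, min (lam n) m) (m : ℕ) :
    (l.take m).sum ≤ ∑ n, min (if n ∈ C then lam n - 1 else lam n) m := by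
  by_cases hbig : ∃ b ∉ C, m < lam b
  · obtain ⟨b, hb, hmb⟩ := hbig
    have hsame : ∀ n, min (if n ∈ C then lam n - 1 else lam n) m = min (lam n) m := fun n => by
      split_ifs with hn
      · have := htop n hn b hb
        omega
      · rfl
    calc (l.take m).sum ≤ ((#C :: l).take m).sum := List.sum_take_le_sum_take_cons hl m
      _ ≤ ∑ n, min (lam n) m := hmaj m
      _ = _ := sum_congr rfl fun n _ => (hsame n).symm
  · push Not at hbig
    have hshift : ∀ n, min (if n ∈ C then lam n - 1 else lam n) m + (if n ∈ C then 1 else 0) =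
        min (lam n) (m + 1) := fun n => by
      split_ifs with hn
      · have := hpos n hn
        omega
      · have := hbig n hn
        omega
    have hsum : ∑ n, min (if n ∈ C then lam n - 1 else lam n) m + #C =
        ∑ n, min (lam n) (m + 1) := by
      rw [← sum_congr rfl fun n _ => hshift n, sum_add_distrib]
      simp
    have := hmaj (m + 1)
    rw [List.take_succ_cons, List.sum_cons] at this
    omega

end Conjugate

section Construction

variable {ι : Type*} [Fintype ι] [DecidableEq ι]

theorem exists_finsets_card_eq_of_antitone (lam : ι → ℕ) {k : ℕ} (e : Fin k → ℕ)
    (he : Antitone e) (hsum : ∑ i, e i = ∑ n, lam n)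
    (hmaj : ∀ m, ((List.ofFn e).take m).sum ≤ ∑ n, min (lam n) m) :
    ∃ S : Fin k → Finset ι, (∀ i, #(S i) = e i) ∧ ∀ n, #{i | n ∈ S i} = lam n := by
  induction k generalizing lam with
  | zero =>
    refine ⟨Fin.elim0, Fin.rec0, fun n => ?_⟩
    simp only [univ_eq_empty, sum_empty] at hsum
    simp [(sum_eq_zero_iff.1 hsum.symm) n (mem_univ n)]
  | succ k ih =>
    rw [List.ofFn_succ] at hmaj
    have hhead : e 0 ≤ #{n | 1 ≤ lam n} := by
      simpa [sum_min_add_one lam 0] using hmaj 1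
    obtain ⟨C, hC, htop⟩ :=
      exists_finset_card_eq_forall_notMem_le lam (hhead.trans (card_le_univ _))
    have hpos : ∀ a ∈ C, 0 < lam a := fun a => pos_of_mem_of_card_le htop (hC ▸ hhead)
    set lam' : ι → ℕ := fun n => if n ∈ C then lam n - 1 else lam n
    have hlam (n : ι) : (if n ∈ C then 1 else 0) + lam' n = lam n := by
      by_cases hn : n ∈ C
      · simp only [lam', if_pos hn]
        have := hpos n hn
        omega
      · simp [lam', hn]
    have hsum' : ∑ i : Fin k, e i.succ = ∑ n, lam' n := by
      have h := (Fin.sum_univ_succ e).symm.trans hsum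
      rw [← sum_congr rfl fun n _ => hlam n, sum_add_distrib] at h
      simp only [sum_ite_mem, univ_inter, sum_const, smul_eq_mul, mul_one, hC] at h
      omega
    have htail_le : ∀ b ∈ List.ofFn fun i : Fin k => e i.succ, b ≤ #C := by
      simpa [← hC, List.mem_ofFn] using fun i : Fin k => he (Fin.zero_le i.succ)
    obtain ⟨S, hS, hcount⟩ := ih lam' (fun i => e i.succ)
      (he.comp_monotone Fin.strictMono_succ.monotone) hsum'
      (sum_take_le_sum_min_of_cons htop hpos htail_le (hC ▸ hmaj))
    refine ⟨Fin.cons C S, Fin.cases hC hS, fun n => ?_⟩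
    rw [card_filter, Fin.sum_univ_succ, ← hlam n, ← hcount n, card_filter]
    simp

theorem exists_finsets_card_eq_of_sum_take_sort_le (lam : ι → ℕ) {D : ℕ} (d : Fin D → ℕ)
    (hsum : ∑ i, d i = ∑ n, lam n)
    (hmaj : ∀ m, (((Multiset.map d univ.val).sort (· ≥ ·)).take m).sum ≤ ∑ n, min (lam n) m) :
    ∃ S : Fin D → Finset ι, (∀ i, #(S i) = d i) ∧ ∀ n, #{i | n ∈ S i} = lam n := by
  set σ : Equiv.Perm (Fin D) := Fin.revPerm.trans (Tuple.sort d)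
  have hanti : Antitone (d ∘ σ) := (Tuple.monotone_sort d).comp_antitone Fin.rev_anti
  have hsort : (Multiset.map d univ.val).sort (· ≥ ·) = List.ofFn (d ∘ σ) := by
    rw [← Multiset.map_univ_val_equiv σ, Multiset.map_map, Fin.univ_val_map,
      Multiset.sort_ge_coe_of_pairwise (List.pairwise_ofFn.2 fun _ _ h => hanti h.le)]
  obtain ⟨S, hS, hcount⟩ := exists_finsets_card_eq_of_antitone lam (d ∘ σ) hanti
    ((Equiv.sum_comp σ d).trans hsum) (hsort ▸ hmaj)
  refine ⟨S ∘ σ.symm, fun i => by simp [hS], fun n => ?_⟩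
  rw [← hcount n, card_filter, card_filter]
  exact Equiv.sum_comp σ.symm fun j => if n ∈ S j then 1 else 0

end Construction

section CoordinateSubspace

variable {𝕜 ι : Type*} [RCLike 𝕜] [Fintype ι] [DecidableEq ι]

theorem finrank_span_single_image (S : Finset ι) :
    Module.finrank 𝕜
      (Submodule.span 𝕜 ((fun n => EuclideanSpace.single n (1 : 𝕜)) '' (S : Set ι))) = #S := by
  rw [← coe_image, Module.finrank_eq_card_basis
    (OrthonormalBasis.span EuclideanSpace.orthonormal_single S).toBasis, Fintype.card_coe]

theorem starProjection_span_single_image_apply (S : Finset ι) (x : EuclideanSpace 𝕜 ι) (n : ι) :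
    (Submodule.span 𝕜 ((fun n => EuclideanSpace.single n (1 : 𝕜)) '' (S : Set ι))).starProjection
      x n = if n ∈ S then x n else 0 := by
  rw [← coe_image, Submodule.starProjection_apply,
    OrthonormalBasis.orthogonalProjectionOnto_apply_eq_sum
      (OrthonormalBasis.span EuclideanSpace.orthonormal_single S)]
  simp [OrthonormalBasis.span_apply, EuclideanSpace.inner_single_left, Pi.single_apply,
    sum_attach S fun m => if n = m then x m else 0]

end CoordinateSubspace

theorem spectral_tetris_fusion_frame_integer_exists_general (N M D : ℕ)
    (lam : Fin N → ℕ) (hlsum : ∑ n, lam n = M)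
    (d : Fin D → ℕ) (hdsum : ∑ i, d i = M)
    (T : ℕ)
    (a : ℕ → ℕ) (ha : ∀ n, a n = (Finset.univ.filter (fun r : Fin N => n ≤ lam r)).card)
    (hmaj : Multiset.Majorizes ((Multiset.range T).map (fun n => a (n + 1)))
      (Multiset.map d Finset.univ.val)) :
    ∃ W : Fin D → Submodule ℝ (EuclideanSpace ℝ (Fin N)),
      (∀ i, ∃ S : Finset (Fin N),
        W i = Submodule.span ℝ ((fun n => EuclideanSpace.single n (1 : ℝ)) '' S)) ∧
      (∀ i, Module.finrank ℝ (W i) = d i) ∧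
      ∀ (x : EuclideanSpace ℝ (Fin N)) (n : Fin N),
        (∑ i, ((W i).subtypeL (((W i).orthogonalProjection) x))) n =
          (lam n : ℝ) * x n := by
  have ha_anti : Antitone a := fun s t hst => by
    simp only [ha]
    exact card_le_card (monotone_filter_right _ fun r _ h => hst.trans h)
  have hconj (m : ℕ) : ((((Multiset.range T).map fun t => a (t + 1)).sort (· ≥ ·)).take m).sum ≤
      ∑ n, min (lam n) m := by
    calc _ ≤ ∑ t ∈ range m, a (t + 1) :=
          sum_take_sort_map_range_le (ha_anti.comp_monotone fun _ _ h => Nat.succ_le_succ h) T m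
      _ = _ := by simp only [ha]; exact sum_range_card_filter_le_eq_sum_min lam m
  obtain ⟨S, hS, hcount⟩ := exists_finsets_card_eq_of_sum_take_sort_le lam d
    (hdsum.trans hlsum.symm) fun m => (hmaj.2 m).trans (hconj m)
  refine ⟨fun i => Submodule.span ℝ ((fun n => EuclideanSpace.single n 1) '' (S i : Set (Fin N))),
    fun i => ⟨S i, rfl⟩, fun i => by rw [finrank_span_single_image, hS], fun x n => ?_⟩
  simp only [Submodule.subtypeL_apply, ← Submodule.starProjection_apply, WithLp.ofLp_sum,
    Finset.sum_apply, starProjection_span_single_image_apply, sum_ite, sum_const, nsmul_eq_mul,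
    hcount, mul_zero, add_zero]

/-- Let `λ_1, …, λ_N` be positive integers summing to `M ≥ N`, let
`d_1, …, d_D` be positive integers summing to `M`, and set `T = max_n λ_n`,
`a_n = #{r : λ_r ≥ n}`.  If `(a_n)_{n=1}^T` majorizes `(d_i)_{i=1}^D`, then
there exist subspaces `W_1, …, W_D` of `ℝ^N`, each spanned by a subset of the
standard orthonormal basis, with `dim W_i = d_i`, such that the sum of the
orthogonal projections onto the `W_i` is the diagonal operator
`diag(λ_1, …, λ_N)`. -/
theorem spectral_tetris_fusion_frame_integer_exists (N M D : ℕ) (hN : 0 < N)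
    (hNM : N ≤ M)
    (lam : Fin N → ℕ) (hlpos : ∀ n, 0 < lam n) (hlsum : ∑ n, lam n = M)
    (d : Fin D → ℕ) (hdpos : ∀ i, 0 < d i) (hdsum : ∑ i, d i = M)
    (T : ℕ) (hT : T = Finset.univ.sup lam)
    (a : ℕ → ℕ) (ha : ∀ n, a n = (Finset.univ.filter (fun r : Fin N => n ≤ lam r)).card)
    (hmaj : Multiset.Majorizes ((Multiset.range T).map (fun n => a (n + 1)))
      (Multiset.map d Finset.univ.val)) :
    ∃ W : Fin D → Submodule ℝ (EuclideanSpace ℝ (Fin N)),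
      (∀ i, ∃ S : Finset (Fin N),
        W i = Submodule.span ℝ ((fun n => EuclideanSpace.single n (1 : ℝ)) '' S)) ∧
      (∀ i, Module.finrank ℝ (W i) = d i) ∧
      ∀ (x : EuclideanSpace ℝ (Fin N)) (n : Fin N),
        (∑ i, ((W i).subtypeL (((W i).orthogonalProjection) x))) n =
          (lam n : ℝ) * x n :=
  spectral_tetris_fusion_frame_integer_exists_general N M D lam hlsum d hdsum T a ha hmaj
end

section
/- Let N < M < 2N be positive integers, K = M − N + 1, L = ⌊M/K⌋, and r = K(L+1) − M. If L(N−M) + N ≥ 0, then M − (r−1)·(L(N−M) + M) ≥ L(N−M) + M; that is, starting with correction factor M and subtracting r−1 stepsizes L(N−M)+M leaves an integer that is at least L(N−M)+M. -/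
/-! With `s = L(N−M)+M` and `t = L(N−M)+N` the stepsizes of the blocks `D_L` and `D_{L+1}`,
the correction factor splits as `M = r·s + (K−r)·t`. The claim `s ≤ M − (r−1)·s` says
`r·s ≤ M`, i.e. `0 ≤ (K−r)·t`; here `t ≥ 0` by assumption and `K − r = M − K·⌊M/K⌋ ≥ 0`. -/

section Stepsizes

variable {R : Type*} [CommRing R]

theorem stepsizes_combination_eq (M N K L r : R) (hK : K = M - N + 1)
    (hr : r = K * (L + 1) - M) :
    r * (L * (N - M) + M) + (K - r) * (L * (N - M) + N) = M := by
  subst hK hr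
  ring

theorem le_sub_mul_of_combination_eq [LinearOrder R] [IsStrictOrderedRing R] {M K r s t : R}
    (hsum : r * s + (K - r) * t = M) (hKr : 0 ≤ K - r) (ht : 0 ≤ t) :
    s ≤ M - (r - 1) * s := by
  nlinarith [mul_nonneg hKr ht]

end Stepsizes

theorem correction_factor_stays_valid_general (N M : ℕ) (h1 : N < M)
    (K L : ℕ) (hK : K = M - N + 1) (hL : L = M / K)
    (r : ℤ) (hr : r = (K : ℤ) * ((L : ℤ) + 1) - M)
    (hpos : 0 ≤ (L : ℤ) * ((N : ℤ) - M) + N) :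
    (L : ℤ) * ((N : ℤ) - M) + M ≤
      (M : ℤ) - (r - 1) * ((L : ℤ) * ((N : ℤ) - M) + M) := by
  have hKZ : (K : ℤ) = M - N + 1 := by omega
  have hKL : (K : ℤ) * L ≤ M := by
    rw [hL]
    exact_mod_cast Nat.mul_div_le M K
  have hKr : 0 ≤ (K : ℤ) - r := by
    rw [hr]
    linarith
  exact le_sub_mul_of_combination_eq (stepsizes_combination_eq _ _ _ _ _ hKZ hr) hKr hpos

/-- Let `N < M < 2N`, `K = M − N + 1`, `L = ⌊M/K⌋`, `r = K(L+1) − M`.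
If `L(N−M) + N ≥ 0`, then `M − (r−1)(L(N−M)+M) ≥ L(N−M)+M`: starting with
correction factor `M` and subtracting `r−1` stepsizes `L(N−M)+M` leaves an
integer that is still at least `L(N−M)+M`. -/
theorem correction_factor_stays_valid (N M : ℕ) (hN : 0 < N) (h1 : N < M)
    (h2 : M < 2 * N) (K L : ℕ) (hK : K = M - N + 1) (hL : L = M / K)
    (r : ℤ) (hr : r = (K : ℤ) * ((L : ℤ) + 1) - M)
    (hpos : 0 ≤ (L : ℤ) * ((N : ℤ) - M) + N) :
    (L : ℤ) * ((N : ℤ) - M) + M ≤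
      (M : ℤ) - (r - 1) * ((L : ℤ) * ((N : ℤ) - M) + M) :=
  correction_factor_stays_valid_general N M h1 K L hK hL r hr hpos
end
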